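/- arXiv:2311.03802 — 7 statements merged into one kernel-verified Lean document; each statement's English description precedes it below -/
import Mathlib

section
/- Let a > 0, μ > 0, and consider F(t) = ∫₀^∞ η^{a-1} cos(2η t^{3/4} + η³ t^{1/4}) e^{-2μη⁴} dη. Then F(t) → 0 as t → ∞. -/
/-!
Split the integral at a small `δ > 0`. On `(0, δ]` the integrand is bounded by `η ^ (a - 1)`,
whose integral `δ ^ a / a` is small. On `(δ, ∞)` the phase `φ η = 2 s η + r η³`
(`s = t ^ (3/4)`, `r = t ^ (1/4)`) has `φ' ≥ 2 s`, so writing the amplitude `g` as `(g / φ') φ'`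
and integrating by parts against `sin ∘ φ` bounds that part by `O(1 / s)`. The curvature term
`g φ'' / φ'²` stays `O(g / (s η))` by AM-GM: `(2 s + 3 r η²)² ≥ 24 s r η²`.
-/

open MeasureTheory Filter Set Real Topology

theorem tendsto_zero_of_forall_abs_le_add {α : Type*} {l : Filter α} {F u : α → ℝ}
    (hu : Tendsto u l (𝓝 0)) (hF : ∀ ε > 0, ∃ C, ∀ᶠ x in l, |F x| ≤ ε + C * u x) :
    Tendsto F l (𝓝 0) := by
  refine Metric.tendsto_nhds.2 fun ε hε ↦ ?_
  obtain ⟨C, hC⟩ := hF (ε / 2) (half_pos hε)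
  have hCu := Metric.tendsto_nhds.1 (by simpa using hu.const_mul C) (ε / 2) (half_pos hε)
  filter_upwards [hC, hCu] with x hx hCx
  rw [Real.dist_eq, sub_zero] at hCx ⊢
  linarith [le_abs_self (C * u x)]

theorem abs_setIntegral_Ioc_zero_le_of_abs_le_rpow {f : ℝ → ℝ} {a δ : ℝ} (ha : 0 < a) (hδ : 0 ≤ δ)
    (hf : ∀ x ∈ Ioc 0 δ, |f x| ≤ x ^ (a - 1)) :
    |∫ x in Ioc 0 δ, f x| ≤ δ ^ a / a := by
  have hint : IntegrableOn (fun x : ℝ ↦ x ^ (a - 1)) (Ioc 0 δ) :=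
    (intervalIntegrable_iff_integrableOn_Ioc_of_le hδ).1
      (intervalIntegral.intervalIntegrable_rpow' (by linarith))
  calc |∫ x in Ioc 0 δ, f x|
      ≤ ∫ x in Ioc 0 δ, x ^ (a - 1) := by
        simpa only [Real.norm_eq_abs] using norm_integral_le_of_norm_le (f := f) hint
          ((ae_restrict_iff' measurableSet_Ioc).2 (.of_forall hf))
    _ = δ ^ a / a := by
        rw [← intervalIntegral.integral_of_le hδ, integral_rpow (Or.inl (by linarith))]
        simp [zero_rpow ha.ne']

theorem abs_setIntegral_Ioi_mul_deriv_mul_cos_le {ψ ψ' φ φ' : ℝ → ℝ} {δ : ℝ}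
    (hψ : ∀ x ∈ Ici δ, HasDerivAt ψ (ψ' x) x) (hφ : ∀ x ∈ Ici δ, HasDerivAt φ (φ' x) x)
    (hψ'_int : IntegrableOn ψ' (Ioi δ))
    (hcos_int : IntegrableOn (fun x ↦ ψ x * φ' x * cos (φ x)) (Ioi δ))
    (hψ_lim : Tendsto ψ atTop (𝓝 0)) :
    |∫ x in Ioi δ, ψ x * φ' x * cos (φ x)| ≤ |ψ δ| + ∫ x in Ioi δ, |ψ' x| := by
  have habs_mul_sin (y z : ℝ) : |y * sin z| ≤ |y| := by
    simpa [abs_mul] using mul_le_of_le_one_right (abs_nonneg y) (abs_sin_le_one z)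
  have hsin_meas : AEStronglyMeasurable (fun x ↦ sin (φ x)) (volume.restrict (Ioi δ)) :=
    (continuous_sin.comp_continuousOn fun x hx ↦ (hφ x hx).continuousAt.continuousWithinAt
      ).mono Ioi_subset_Ici_self |>.aestronglyMeasurable measurableSet_Ioi
  have hψ'sin_int : IntegrableOn (fun x ↦ ψ' x * sin (φ x)) (Ioi δ) :=
    hψ'_int.mul_bdd hsin_meas (.of_forall fun x ↦ by simpa using abs_sin_le_one (φ x))
  have hψsin_lim : Tendsto (fun x ↦ ψ x * sin (φ x)) atTop (𝓝 0) :=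
    squeeze_zero_norm (fun x ↦ habs_mul_sin _ _) (by simpa using hψ_lim.norm)
  have hparts := integral_Ioi_of_hasDerivAt_of_tendsto' (f := fun x ↦ ψ x * sin (φ x))
    (f' := fun x ↦ ψ' x * sin (φ x) + ψ x * φ' x * cos (φ x))
    (fun x hx ↦ ((hψ x hx).mul (hφ x hx).sin).congr_deriv (by ring)) (hψ'sin_int.add hcos_int)
    hψsin_lim
  rw [integral_add hψ'sin_int hcos_int] at hparts
  have hrest : |∫ x in Ioi δ, ψ' x * sin (φ x)| ≤ ∫ x in Ioi δ, |ψ' x| := by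
    simpa only [Real.norm_eq_abs] using
      norm_integral_le_of_norm_le (f := fun x ↦ ψ' x * sin (φ x)) hψ'_int.norm
        (.of_forall fun x ↦ habs_mul_sin _ _)
  calc |∫ x in Ioi δ, ψ x * φ' x * cos (φ x)|
      = |-(ψ δ * sin (φ δ)) - ∫ x in Ioi δ, ψ' x * sin (φ x)| := by
        congr 1; linarith
    _ ≤ |ψ δ * sin (φ δ)| + |∫ x in Ioi δ, ψ' x * sin (φ x)| := by
        simpa using abs_sub (-(ψ δ * sin (φ δ))) _
    _ ≤ |ψ δ| + ∫ x in Ioi δ, |ψ' x| := add_le_add (habs_mul_sin _ _) hrest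

theorem abs_div_cubic_phase_deriv_le {s r : ℝ} (hs : 0 < s) (hr : 0 ≤ r) (x y : ℝ) :
    |y / (2 * s + 3 * x ^ 2 * r)| ≤ |y| / s := by
  rw [abs_div, abs_of_pos (a := 2 * s + 3 * x ^ 2 * r) (by positivity)]
  gcongr
  nlinarith [sq_nonneg x]

theorem abs_cubic_phase_amplitude_deriv_le {δ s r x : ℝ} (hδ : 0 < δ) (hs : 0 < s) (hr : 0 ≤ r)
    (hx : δ < x) (y y' : ℝ) :
    |y' / (2 * s + 3 * x ^ 2 * r) - y * (6 * x * r) / (2 * s + 3 * x ^ 2 * r) ^ 2| ≤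
      |y'| / s + |y| / δ / s := by
  have hx0 : 0 < x := hδ.trans hx
  have hcurv : 6 * x * r / (2 * s + 3 * x ^ 2 * r) ^ 2 ≤ 1 / (δ * s) := by
    rw [div_le_div_iff₀ (by positivity) (by positivity)]
    -- AM-GM
    nlinarith [sq_nonneg (2 * s - 3 * x ^ 2 * r),
      mul_nonneg (mul_nonneg hr hs.le) (sub_nonneg.2 hx.le)]
  calc _ ≤ |y' / (2 * s + 3 * x ^ 2 * r)| + |y| * (6 * x * r / (2 * s + 3 * x ^ 2 * r) ^ 2) := by
        refine (abs_sub _ _).trans_eq ?_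
        rw [mul_div_assoc, abs_mul, abs_of_nonneg (a := 6 * x * r / _) (by positivity)]
    _ ≤ |y'| / s + |y| * (1 / (δ * s)) := by
        gcongr
        exact abs_div_cubic_phase_deriv_le hs hr x y'
    _ = _ := by ring

theorem abs_setIntegral_Ioi_mul_cos_cubic_le {g g' : ℝ → ℝ} {δ s r : ℝ} (hδ : 0 < δ) (hs : 0 < s)
    (hr : 0 ≤ r) (hg : ∀ x ∈ Ici δ, HasDerivAt g (g' x) x) (hg_int : IntegrableOn g (Ioi δ))
    (hg'_int : IntegrableOn g' (Ioi δ)) :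
    |∫ x in Ioi δ, g x * cos (2 * x * s + x ^ 3 * r)| ≤
      (|g δ| + (∫ x in Ioi δ, |g' x|) + (∫ x in Ioi δ, |g x|) / δ) / s := by
  set φ' : ℝ → ℝ := fun x ↦ 2 * s + 3 * x ^ 2 * r
  have hφ'_pos (x : ℝ) : 0 < φ' x := by simp only [φ']; positivity
  have hφ (x : ℝ) : HasDerivAt (fun x ↦ 2 * x * s + x ^ 3 * r) (φ' x) x :=
    ((((hasDerivAt_id' x).const_mul 2).mul_const s).add
      ((hasDerivAt_pow 3 x).mul_const r)).congr_deriv (by simp only [φ']; push_cast; ring)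
  have hφ' (x : ℝ) : HasDerivAt φ' (6 * x * r) x :=
    (((hasDerivAt_pow 2 x).const_mul 3).mul_const r |>.const_add (2 * s)).congr_deriv
      (by push_cast; ring)
  set ψ' : ℝ → ℝ := fun x ↦ g' x / φ' x - g x * (6 * x * r) / φ' x ^ 2
  have hψ (x : ℝ) (hx : x ∈ Ici δ) : HasDerivAt (fun x ↦ g x / φ' x) (ψ' x) x :=
    ((hg x hx).div (hφ' x) (hφ'_pos x).ne').congr_deriv (by simp only [ψ']; field_simp)
  have habs_div (y x : ℝ) : |y / φ' x| ≤ |y| / s := abs_div_cubic_phase_deriv_le hs hr x y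
  have hψ'_le (x : ℝ) (hx : x ∈ Ioi δ) : |ψ' x| ≤ |g' x| / s + |g x| / δ / s :=
    abs_cubic_phase_amplitude_deriv_le hδ hs hr hx (g x) (g' x)
  have hbound_int : IntegrableOn (fun x ↦ |g' x| / s + |g x| / δ / s) (Ioi δ) :=
    (hg'_int.abs.div_const s).add ((hg_int.abs.div_const δ).div_const s)
  have hψ'_int : IntegrableOn ψ' (Ioi δ) := by
    refine hbound_int.mono' ?_ ((ae_restrict_iff' measurableSet_Ioi).2 (.of_forall hψ'_le))
    have hg_meas := hg_int.aestronglyMeasurable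
    have hg'_meas := hg'_int.aestronglyMeasurable
    simp only [ψ', φ', div_eq_mul_inv]
    fun_prop
  have hcos_int : IntegrableOn (fun x ↦ g x * cos (2 * x * s + x ^ 3 * r)) (Ioi δ) :=
    hg_int.mul_bdd (by fun_prop) (.of_forall fun x ↦ by simpa using abs_cos_le_one _)
  have hcancel (x : ℝ) : g x / φ' x * φ' x = g x := div_mul_cancel₀ _ (hφ'_pos x).ne'
  have hg_lim : Tendsto g atTop (𝓝 0) :=
    tendsto_zero_of_hasDerivAt_of_integrableOn_Ioi (fun x hx ↦ hg x (mem_Ici_of_Ioi hx))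
      hg'_int hg_int
  calc |∫ x in Ioi δ, g x * cos (2 * x * s + x ^ 3 * r)|
      = |∫ x in Ioi δ, g x / φ' x * φ' x * cos (2 * x * s + x ^ 3 * r)| := by
        simp only [hcancel]
    _ ≤ |g δ / φ' δ| + ∫ x in Ioi δ, |ψ' x| :=
        abs_setIntegral_Ioi_mul_deriv_mul_cos_le hψ (fun x _ ↦ hφ x)
          hψ'_int (by simpa only [hcancel] using hcos_int)
          (squeeze_zero_norm (fun x ↦ habs_div (g x) x) (by simpa using hg_lim.norm.div_const s))
    _ ≤ |g δ| / s + ∫ x in Ioi δ, (|g' x| / s + |g x| / δ / s) :=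
        add_le_add (habs_div _ _)
          (setIntegral_mono_on hψ'_int.abs hbound_int measurableSet_Ioi hψ'_le)
    _ = _ := by
        rw [integral_add (hg'_int.abs.div_const s) ((hg_int.abs.div_const δ).div_const s),
          integral_div, integral_div, integral_div]
        ring

theorem abs_rpow_mul_cos_mul_exp_le {x : ℝ} (hx : 0 ≤ x) (p y z : ℝ) :
    |x ^ p * cos y * exp z| ≤ x ^ p * exp z := by
  rw [abs_mul, abs_mul, abs_of_nonneg (rpow_nonneg hx p), abs_of_pos (exp_pos z)]
  gcongr
  exact mul_le_of_le_one_right (rpow_nonneg hx p) (abs_cos_le_one y)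

theorem integrableOn_Ioi_zero_rpow_mul_cos_mul_exp {p c : ℝ} {θ : ℝ → ℝ} (hp : -1 < p)
    (hc : c < 0) (hθ : Measurable θ) :
    IntegrableOn (fun x ↦ x ^ p * cos (θ x) * exp (c * x ^ 4)) (Ioi 0) := by
  have hdom : IntegrableOn (fun x : ℝ ↦ x ^ p * exp (c * x ^ 4)) (Ioi 0) := by
    simpa using integrableOn_rpow_mul_exp_neg_mul_rpow hp (by norm_num : (0 : ℝ) < 4) (neg_pos.2 hc)
  exact hdom.mono' (by fun_prop) ((ae_restrict_iff' measurableSet_Ioi).2 (.of_forall fun x hx ↦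
    abs_rpow_mul_cos_mul_exp_le (le_of_lt hx) _ _ _))

theorem integrableOn_Ioi_rpow_mul_exp_mul_pow_four {δ c : ℝ} (p : ℝ) (hδ : 0 < δ) (hc : c < 0) :
    IntegrableOn (fun x : ℝ ↦ x ^ p * exp (c * x ^ 4)) (Ioi δ) := by
  refine integrable_of_isBigO_exp_neg one_half_pos ?_ ?_
  · exact (continuousOn_id.rpow_const fun x hx ↦ Or.inl (hδ.trans_le hx).ne').mul (by fun_prop)
  · simpa using (rpow_mul_exp_neg_mul_rpow_isLittleO_exp_neg p (by norm_num : (1 : ℝ) < 4)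
      (neg_pos.2 hc)).isBigO

theorem exists_abs_setIntegral_Ioi_rpow_mul_cos_mul_exp_le (a : ℝ) {c δ : ℝ} (hc : c < 0)
    (hδ : 0 < δ) :
    ∃ C, ∀ s > 0, ∀ r ≥ 0,
      |∫ x in Ioi δ, x ^ (a - 1) * cos (2 * x * s + x ^ 3 * r) * exp (c * x ^ 4)| ≤ C * s⁻¹ := by
  set g : ℝ → ℝ := fun x ↦ x ^ (a - 1) * exp (c * x ^ 4)
  set g' : ℝ → ℝ := fun x ↦ ((a - 1) * x ^ (a - 2) + 4 * c * x ^ (a + 2)) * exp (c * x ^ 4)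
  have hg (x : ℝ) (hx : x ∈ Ici δ) : HasDerivAt g (g' x) x := by
    have hx0 : x ≠ 0 := (hδ.trans_le hx).ne'
    have hpow : x ^ (a + 2) = x ^ (a - 1) * x ^ 3 := by
      rw [← rpow_add_natCast hx0]; congr 1; push_cast; ring
    refine ((hasDerivAt_rpow_const (Or.inl hx0)).mul
      ((hasDerivAt_pow 4 x).const_mul c).exp).congr_deriv ?_
    simp only [g', hpow, show a - 1 - 1 = a - 2 by ring]
    push_cast
    ring
  have hg'_int : IntegrableOn g' (Ioi δ) := by
    refine IntegrableOn.congr_fun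
      (((integrableOn_Ioi_rpow_mul_exp_mul_pow_four (a - 2) hδ hc).const_mul (a - 1)).add
        ((integrableOn_Ioi_rpow_mul_exp_mul_pow_four (a + 2) hδ hc).const_mul (4 * c)))
      (fun x _ ↦ by simp only [g', Pi.add_apply]; ring) measurableSet_Ioi
  refine ⟨|g δ| + (∫ x in Ioi δ, |g' x|) + (∫ x in Ioi δ, |g x|) / δ, fun s hs r hr ↦ ?_⟩
  rw [← div_eq_mul_inv]
  convert abs_setIntegral_Ioi_mul_cos_cubic_le hδ hs hr hg
    (integrableOn_Ioi_rpow_mul_exp_mul_pow_four (a - 1) hδ hc) hg'_int using 4 with x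
  exact mul_right_comm _ _ _

theorem riemann_lebesgue_oscillatory (a μ : ℝ) (ha : 0 < a) (hμ : 0 < μ) :
    Tendsto (fun t : ℝ =>
      ∫ η in Set.Ioi (0 : ℝ),
        η ^ (a - 1) * Real.cos (2 * η * t ^ ((3 : ℝ) / 4) + η ^ 3 * t ^ ((1 : ℝ) / 4)) *
          Real.exp (-2 * μ * η ^ 4)) atTop (nhds 0) := by
  have hc : -2 * μ < 0 := by linarith
  refine tendsto_zero_of_forall_abs_le_add
    (tendsto_rpow_atTop (by norm_num : (0 : ℝ) < 3 / 4)).inv_tendsto_atTop fun ε hε ↦ ?_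
  obtain ⟨δ, hδ, hδε⟩ : ∃ δ > 0, δ ^ a / a = ε :=
    ⟨(a * ε) ^ a⁻¹, by positivity, by
      rw [← rpow_mul (by positivity), inv_mul_cancel₀ ha.ne', rpow_one]; field_simp⟩
  obtain ⟨C, hC⟩ := exists_abs_setIntegral_Ioi_rpow_mul_cos_mul_exp_le a hc hδ
  refine ⟨C, ?_⟩
  filter_upwards [Ioi_mem_atTop 0] with t ht
  have hint := integrableOn_Ioi_zero_rpow_mul_cos_mul_exp (by linarith : -1 < a - 1) hc
    (θ := fun η ↦ 2 * η * t ^ ((3 : ℝ) / 4) + η ^ 3 * t ^ ((1 : ℝ) / 4)) (by fun_prop)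
  rw [← Ioc_union_Ioi_eq_Ioi hδ.le, setIntegral_union (Ioc_disjoint_Ioi le_rfl) measurableSet_Ioi
    (hint.mono_set Ioc_subset_Ioi_self) (hint.mono_set (Ioi_subset_Ioi hδ.le))]
  refine (abs_add_le _ _).trans
    (add_le_add ?_ (hC _ (rpow_pos_of_pos ht _) _ (rpow_pos_of_pos ht _).le))
  refine hδε ▸ abs_setIntegral_Ioc_zero_le_of_abs_le_rpow ha hδ.le fun x hx ↦ ?_
  refine (abs_rpow_mul_cos_mul_exp_le hx.1.le _ _ _).trans (mul_le_of_le_one_right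
    (rpow_nonneg hx.1.le _) (exp_le_one_iff.2 ?_))
  nlinarith [pow_pos hx.1 4]
end

section
/- Let n ≥ 1, s ≥ 0, μ > 0, and define Ĝ₀(t,ξ) = cos(|ξ|t + (1/2)|ξ|³t) e^{-μ|ξ|⁴t} for ξ ∈ ℝⁿ. Then there exist constants c₁, c₂ > 0 and T₀ ≥ 1 such that for all t ≥ T₀, c₁ t^{-(2s+n)/8} ≤ (∫_{ℝⁿ} |ξ|^{2s} |Ĝ₀(t,ξ)|² dξ)^{1/2} ≤ c₂ t^{-(2s+n)/8}. -/
/-! In polar coordinates the squared norm is `|Sⁿ⁻¹| · J(t)` with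
`J(t) = ∫₀^∞ r^(2s+n-1) cos²(rt + r³t/2) e^(-2μtr⁴) dr`.
Dropping `cos² ≤ 1` bounds `J(t)` by a Gamma integral of size `t^(-(2s+n)/4)`.
For the lower bound, restrict to the window `r ∈ [t^(-1/4), 2t^(-1/4)]`, where `r^(2s+n-1)` is
comparable to `t^(-(2s+n-1)/4)` and the damping factor is at least `e^(-32μ)`. There the phase
`φ(r) = rt + r³t/2` grows by more than `t^(3/4)` while `φ' ≤ 7t`, so substituting `y = φ(r)` and
using `∫ cos² y dy = (y + sin y cos y)/2` shows that `cos² φ` has integral `≳ t^(-1/4)` over the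
window. -/

open MeasureTheory Set Real

theorem le_integral_cos_sq_comp {φ φ' : ℝ → ℝ} {a b M : ℝ} (hab : a ≤ b) (hM : 0 < M)
    (hφ : ∀ x ∈ uIcc a b, HasDerivAt φ (φ' x) x) (hφ' : ContinuousOn φ' (uIcc a b))
    (hφ'M : ∀ x ∈ Icc a b, φ' x ≤ M) :
    (φ b - φ a - 1) / (2 * M) ≤ ∫ x in a..b, cos (φ x) ^ 2 := by
  have hφc : ContinuousOn φ (uIcc a b) := fun x hx => (hφ x hx).continuousAt.continuousWithinAt
  have hcos : ContinuousOn (fun x => cos (φ x) ^ 2) (uIcc a b) :=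
    (continuous_cos.comp_continuousOn hφc).pow 2
  have hsubst : ∫ x in a..b, cos (φ x) ^ 2 * φ' x = ∫ y in φ a..φ b, cos y ^ 2 :=
    intervalIntegral.integral_comp_mul_deriv hφ hφ' (continuous_cos.pow 2)
  have hcs : ∀ y, |cos y * sin y| ≤ 1 / 2 := fun y => by
    rw [show cos y * sin y = sin (2 * y) / 2 by rw [sin_two_mul]; ring, abs_div]
    have := abs_sin_le_one (2 * y)
    rw [abs_two]; linarith
  have hlow : (φ b - φ a - 1) / 2 ≤ ∫ x in a..b, cos (φ x) ^ 2 * φ' x := by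
    rw [hsubst, integral_cos_sq]
    linarith [abs_le.mp (hcs (φ a)), abs_le.mp (hcs (φ b))]
  have hup : ∫ x in a..b, cos (φ x) ^ 2 * φ' x ≤ M * ∫ x in a..b, cos (φ x) ^ 2 := by
    rw [← intervalIntegral.integral_const_mul]
    refine intervalIntegral.integral_mono_on hab ((hcos.mul hφ').intervalIntegrable)
      (hcos.const_smul M).intervalIntegrable fun x hx => ?_
    rw [mul_comm M]
    exact mul_le_mul_of_nonneg_left (hφ'M x hx) (sq_nonneg _)
  rw [div_le_iff₀ (by positivity)]
  linarith

theorem rpow_half_bounds_of_bounds {x A B t p : ℝ} (hA : 0 ≤ A) (ht : 0 < t)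
    (h₁ : A * t ^ (-p / 4) ≤ x) (h₂ : x ≤ B * t ^ (-p / 4)) :
    A ^ (1 / 2 : ℝ) * t ^ (-p / 8) ≤ x ^ (1 / 2 : ℝ) ∧
      x ^ (1 / 2 : ℝ) ≤ B ^ (1 / 2 : ℝ) * t ^ (-p / 8) := by
  have hτ : 0 < t ^ (-p / 4) := rpow_pos_of_pos ht _
  have hx : 0 ≤ x := (by positivity : 0 ≤ A * t ^ (-p / 4)).trans h₁
  have hB : 0 ≤ B := nonneg_of_mul_nonneg_left (hx.trans h₂) hτ
  have hsqrt : ∀ D : ℝ, 0 ≤ D →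
      (D * t ^ (-p / 4)) ^ (1 / 2 : ℝ) = D ^ (1 / 2 : ℝ) * t ^ (-p / 8) :=
    fun D hD => by rw [mul_rpow hD hτ.le, ← rpow_mul ht.le]; ring_nf
  rw [← hsqrt A hA, ← hsqrt B hB]
  exact ⟨rpow_le_rpow (by positivity) h₁ (by norm_num), rpow_le_rpow hx h₂ (by norm_num)⟩

namespace G0Kernel

noncomputable def phase (t r : ℝ) : ℝ := r * t + 1 / 2 * r ^ 3 * t

noncomputable def radialProfile (p c t r : ℝ) : ℝ :=
  r ^ (p - 1) * cos (phase t r) ^ 2 * exp (-(c * t) * r ^ 4)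

theorem hasDerivAt_phase (t r : ℝ) : HasDerivAt (phase t) (t + 3 / 2 * r ^ 2 * t) r := by
  refine (((hasDerivAt_id r).mul_const t).add
    (((hasDerivAt_pow 3 r).const_mul (1 / 2 : ℝ)).mul_const t)).congr_deriv ?_
  push_cast; ring

theorem radialProfile_nonneg (p c t : ℝ) {r : ℝ} (hr : 0 ≤ r) : 0 ≤ radialProfile p c t r := by
  have := rpow_nonneg hr (p - 1)
  unfold radialProfile; positivity

theorem radialProfile_le (p c t : ℝ) {r : ℝ} (hr : 0 ≤ r) :
    radialProfile p c t r ≤ r ^ (p - 1) * exp (-(c * t) * r ^ (4 : ℝ)) := by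
  rw [radialProfile, rpow_ofNat]
  gcongr
  exact mul_le_of_le_one_right (rpow_nonneg hr _) (cos_sq_le_one _)

theorem integrableOn_radialProfile {p c t : ℝ} (hp : 0 < p) (hc : 0 < c) (ht : 0 < t) :
    IntegrableOn (radialProfile p c t) (Ioi 0) := by
  refine (integrableOn_rpow_mul_exp_neg_mul_rpow (s := p - 1) (by linarith) four_pos
    (mul_pos hc ht)).mono'
    (by unfold radialProfile phase; fun_prop) ?_
  filter_upwards [ae_restrict_mem measurableSet_Ioi] with r hr
  rw [norm_of_nonneg (radialProfile_nonneg p c t hr.le)]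
  exact radialProfile_le p c t hr.le

theorem integral_radialProfile_le {p c t : ℝ} (hp : 0 < p) (hc : 0 < c) (ht : 0 < t) :
    ∫ r in Ioi 0, radialProfile p c t r ≤
      c ^ (-p / 4) * (1 / 4) * Gamma (p / 4) * t ^ (-p / 4) := by
  calc ∫ r in Ioi 0, radialProfile p c t r
      ≤ ∫ r in Ioi 0, r ^ (p - 1) * exp (-(c * t) * r ^ (4 : ℝ)) :=
        setIntegral_mono_on (integrableOn_radialProfile hp hc ht)
          (integrableOn_rpow_mul_exp_neg_mul_rpow (s := p - 1) (by linarith) four_pos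
            (mul_pos hc ht)) measurableSet_Ioi fun r hr => radialProfile_le p c t (le_of_lt hr)
    _ = _ := by
        rw [integral_rpow_mul_exp_neg_mul_rpow (q := p - 1) four_pos (by linarith) (mul_pos hc ht),
          sub_add_cancel, mul_rpow hc.le ht.le]
        ring

theorem le_integral_cos_sq_phase {u : ℝ} (hu : 1 ≤ u) :
    1 / (28 * u) ≤ ∫ r in u⁻¹..2 * u⁻¹, cos (phase (u ^ 4) r) ^ 2 := by
  have hu0 : 0 < u := one_pos.trans_le hu
  have hinv : u⁻¹ ≤ 1 := inv_le_one_of_one_le₀ hu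
  have hM : ∀ r ∈ Icc u⁻¹ (2 * u⁻¹), u ^ 4 + 3 / 2 * r ^ 2 * u ^ 4 ≤ 7 * u ^ 4 := by
    rintro r ⟨hr₁, hr₂⟩
    have : r ^ 2 ≤ 4 := by nlinarith [inv_pos.mpr hu0]
    nlinarith [pow_pos hu0 4]
  refine le_trans ?_ (le_integral_cos_sq_comp (by linarith [inv_pos.mpr hu0]) (by positivity)
    (fun r _ => hasDerivAt_phase (u ^ 4) r) (by fun_prop) hM)
  have hgain : phase (u ^ 4) (2 * u⁻¹) - phase (u ^ 4) u⁻¹ = u ^ 3 + 7 / 2 * u := by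
    unfold phase; field_simp; ring
  rw [hgain, div_le_div_iff₀ (by positivity) (by positivity)]
  nlinarith [pow_pos hu0 3, pow_pos hu0 4]

theorem le_radialProfile {p c u r : ℝ} (hp : 1 ≤ p) (hc : 0 ≤ c) (hu : 0 < u)
    (hr : r ∈ Icc u⁻¹ (2 * u⁻¹)) :
    u⁻¹ ^ (p - 1) * exp (-(16 * c)) * cos (phase (u ^ 4) r) ^ 2 ≤ radialProfile p c (u ^ 4) r := by
  have hur : u * r ≤ 2 := by
    have := mul_le_mul_of_nonneg_left hr.2 hu.le
    rwa [mul_left_comm, mul_inv_cancel₀ hu.ne', mul_one] at this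
  have hur0 : 0 ≤ u * r := mul_nonneg hu.le ((inv_pos.mpr hu).le.trans hr.1)
  have hexp : exp (-(16 * c)) ≤ exp (-(c * u ^ 4) * r ^ 4) := by
    have := pow_le_pow_left₀ hur0 hur 4
    rw [exp_le_exp, mul_pow] at *
    nlinarith
  calc u⁻¹ ^ (p - 1) * exp (-(16 * c)) * cos (phase (u ^ 4) r) ^ 2
      ≤ r ^ (p - 1) * exp (-(c * u ^ 4) * r ^ 4) * cos (phase (u ^ 4) r) ^ 2 := by
        have hpow := rpow_le_rpow (inv_nonneg.mpr hu.le) hr.1 (sub_nonneg.mpr hp)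
        have := rpow_nonneg (inv_nonneg.mpr hu.le |>.trans hr.1) (p - 1)
        gcongr
    _ = radialProfile p c (u ^ 4) r := by unfold radialProfile; ring

theorem le_integral_radialProfile_pow_four {p c u : ℝ} (hp : 1 ≤ p) (hc : 0 < c) (hu : 1 ≤ u) :
    exp (-(16 * c)) / 28 * u⁻¹ ^ p ≤ ∫ r in Ioi 0, radialProfile p c (u ^ 4) r := by
  have hu0 : 0 < u := one_pos.trans_le hu
  have hab : u⁻¹ ≤ 2 * u⁻¹ := by linarith [inv_pos.mpr hu0]
  have hint := integrableOn_radialProfile (by linarith) hc (pow_pos hu0 4) (p := p)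
  have hsub : Ioc u⁻¹ (2 * u⁻¹) ⊆ Ioi 0 := fun r hr => (inv_pos.mpr hu0).trans hr.1
  calc exp (-(16 * c)) / 28 * u⁻¹ ^ p
      = u⁻¹ ^ (p - 1) * exp (-(16 * c)) * (1 / (28 * u)) := by
        rw [← sub_add_cancel p 1, rpow_add_one (inv_ne_zero hu0.ne'), add_sub_cancel_right]
        field_simp
    _ ≤ u⁻¹ ^ (p - 1) * exp (-(16 * c)) * ∫ r in u⁻¹..2 * u⁻¹, cos (phase (u ^ 4) r) ^ 2 := by
        gcongr; exact le_integral_cos_sq_phase hu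
    _ = ∫ r in u⁻¹..2 * u⁻¹, u⁻¹ ^ (p - 1) * exp (-(16 * c)) * cos (phase (u ^ 4) r) ^ 2 :=
        (intervalIntegral.integral_const_mul _ _).symm
    _ ≤ ∫ r in u⁻¹..2 * u⁻¹, radialProfile p c (u ^ 4) r := by
        refine intervalIntegral.integral_mono_on hab
          (Continuous.intervalIntegrable (by unfold phase; fun_prop) _ _) ?_
          fun r hr => le_radialProfile hp hc.le hu0 hr
        exact (intervalIntegrable_iff_integrableOn_Ioc_of_le hab).mpr (hint.mono_set hsub)
    _ = ∫ r in Ioc u⁻¹ (2 * u⁻¹), radialProfile p c (u ^ 4) r :=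
        intervalIntegral.integral_of_le hab
    _ ≤ ∫ r in Ioi 0, radialProfile p c (u ^ 4) r := by
        refine setIntegral_mono_set hint ?_ hsub.eventuallyLE
        filter_upwards [ae_restrict_mem measurableSet_Ioi] with r hr
        exact radialProfile_nonneg p c _ hr.le

theorem le_integral_radialProfile {p c t : ℝ} (hp : 1 ≤ p) (hc : 0 < c) (ht : 1 ≤ t) :
    exp (-(16 * c)) / 28 * t ^ (-p / 4) ≤ ∫ r in Ioi 0, radialProfile p c t r := by
  have ht0 : 0 ≤ t := zero_le_one.trans ht
  have hu : (t ^ (4⁻¹ : ℝ)) ^ 4 = t := by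
    rw [← rpow_natCast, ← rpow_mul ht0]; norm_num
  have hpow : (t ^ (4⁻¹ : ℝ))⁻¹ ^ p = t ^ (-p / 4) := by
    rw [inv_rpow (rpow_nonneg ht0 _), ← rpow_mul ht0, ← rpow_neg ht0]; ring_nf
  simpa only [hu, hpow] using
    le_integral_radialProfile_pow_four hp hc (one_le_rpow ht (by norm_num : (0 : ℝ) ≤ 4⁻¹))

noncomputable def sphereArea (n : ℕ) : ℝ :=
  n * volume.real (Metric.ball (0 : EuclideanSpace ℝ (Fin n)) 1)

theorem sphereArea_pos {n : ℕ} (hn : 1 ≤ n) : 0 < sphereArea n := by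
  have : Nonempty (Fin n) := ⟨⟨0, hn⟩⟩
  have : (0 : ℝ) < n := by exact_mod_cast hn
  exact mul_pos this
    (ENNReal.toReal_pos (Metric.measure_ball_pos _ _ one_pos).ne' measure_ball_lt_top.ne)

theorem integral_G0_sq_eq_radial {n : ℕ} (hn : 1 ≤ n) (s μ t : ℝ) :
    ∫ ξ : EuclideanSpace ℝ (Fin n),
        ‖ξ‖ ^ (2 * s) * (cos (‖ξ‖ * t + 1 / 2 * ‖ξ‖ ^ 3 * t) * exp (-μ * ‖ξ‖ ^ 4 * t)) ^ 2 =
      sphereArea n * ∫ r in Ioi 0, radialProfile (2 * s + n) (2 * μ) t r := by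
  have : Nonempty (Fin n) := ⟨⟨0, hn⟩⟩
  rw [integral_fun_norm_addHaar volume
    fun r => r ^ (2 * s) * (cos (r * t + 1 / 2 * r ^ 3 * t) * exp (-μ * r ^ 4 * t)) ^ 2]
  simp only [finrank_euclideanSpace_fin, nsmul_eq_mul, smul_eq_mul, sphereArea, ← mul_assoc]
  congr 1
  refine setIntegral_congr_fun measurableSet_Ioi fun r (hr : 0 < r) => ?_
  have hexp : exp (-μ * r ^ 4 * t) ^ 2 = exp (-(2 * μ * t) * r ^ 4) := by
    rw [← exp_nat_mul]; ring_nf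
  have hpow : r ^ (2 * s + n - 1) = r ^ (2 * s) * r ^ (n - 1) := by
    rw [← rpow_natCast, ← rpow_add hr, Nat.cast_sub hn]; ring_nf
  simp only [radialProfile, phase, hpow, mul_pow]
  rw [hexp]
  ring

end G0Kernel

open G0Kernel in
theorem G0_optimal_Hs_estimate (n : ℕ) (hn : 1 ≤ n) (s μ : ℝ) (hs : 0 ≤ s) (hμ : 0 < μ) :
    ∃ c₁ > (0 : ℝ), ∃ c₂ > (0 : ℝ), ∃ T₀ : ℝ, 1 ≤ T₀ ∧ ∀ t : ℝ, T₀ ≤ t →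
      c₁ * t ^ (-(2 * s + (n : ℝ)) / 8) ≤
        (∫ ξ : EuclideanSpace ℝ (Fin n),
          ‖ξ‖ ^ (2 * s) *
            (Real.cos (‖ξ‖ * t + (1 / 2) * ‖ξ‖ ^ 3 * t) * Real.exp (-μ * ‖ξ‖ ^ 4 * t)) ^ 2) ^
          ((1 : ℝ) / 2) ∧
      (∫ ξ : EuclideanSpace ℝ (Fin n),
          ‖ξ‖ ^ (2 * s) *
            (Real.cos (‖ξ‖ * t + (1 / 2) * ‖ξ‖ ^ 3 * t) * Real.exp (-μ * ‖ξ‖ ^ 4 * t)) ^ 2) ^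
          ((1 : ℝ) / 2) ≤ c₂ * t ^ (-(2 * s + (n : ℝ)) / 8) := by
  have hp : 1 ≤ 2 * s + (n : ℝ) := by
    have : (1 : ℝ) ≤ n := by exact_mod_cast hn
    linarith
  have hc : 0 < 2 * μ := by positivity
  have hΓ := Gamma_pos_of_pos (show 0 < (2 * s + (n : ℝ)) / 4 by linarith)
  have hC := sphereArea_pos hn
  refine ⟨(sphereArea n * (exp (-(16 * (2 * μ))) / 28)) ^ (1 / 2 : ℝ), by positivity,
    (sphereArea n * ((2 * μ) ^ (-(2 * s + n) / 4) * (1 / 4) * Gamma ((2 * s + n) / 4))) ^ (1 / 2 : ℝ),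
    by positivity, 1, le_rfl, fun t ht => ?_⟩
  have ht0 : 0 < t := one_pos.trans_le ht
  rw [integral_G0_sq_eq_radial hn]
  refine rpow_half_bounds_of_bounds (by positivity) ht0 ?_ ?_ <;> rw [mul_assoc] <;> gcongr
  · exact le_integral_radialProfile hp hc ht
  · exact integral_radialProfile_le (by linarith) hc ht0
end

section
/- Let n = 1, μ > 0, and define Ĝ₁(t,ξ) = |ξ|⁻¹ sin(|ξ|t + (1/2)|ξ|³t) e^{-μ|ξ|⁴t} for ξ ∈ ℝ. Then there exist constants c₁, c₂ > 0 and T₀ ≥ 1 such that for all t ≥ T₀, c₁ √t ≤ (∫_ℝ |Ĝ₁(t,ξ)|² dξ)^{1/2} ≤ c₂ √t. -/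
/-!
For `|ξ| ≤ 1/t` (and `t ≥ 1`) the phase lies between `|ξ| t` and `3/2 · |ξ| t ≤ 3/2 < π/2` and the
damping factor lies in `[e^{-μ}, 1]`, so `|Ĝ₁(t, ξ)| ≍ t` on a set of measure `2/t`, which contributes
`≍ t` to `‖Ĝ₁(t, ·)‖²`. For `|ξ| > 1/t` the crude bound `|Ĝ₁(t, ξ)| ≤ |ξ|⁻¹` contributes at most
`2 ∫_{1/t}^∞ ξ⁻² dξ = 2t`.
-/

open MeasureTheory Set Real

section

variable {f : ℝ → ℝ} {a : ℝ}

lemma integrableOn_Ioi_inv_sq (ha : 0 < a) : IntegrableOn (fun x : ℝ => (x ^ 2)⁻¹) (Ioi a) := by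
  simpa using integrableOn_Ioi_rpow_of_lt (by norm_num : (-2 : ℝ) < -1) ha

lemma integral_Ioi_inv_sq (ha : 0 < a) : ∫ x in Ioi a, (x ^ 2)⁻¹ = a⁻¹ := by
  have h := integral_Ioi_rpow_of_lt (by norm_num : (-2 : ℝ) < -1) ha
  norm_num [rpow_neg_one] at h
  exact h

lemma integrableOn_Ioi_zero_of_le_of_le_inv_sq {M : ℝ} (ha : 0 < a) (hf : Measurable f)
    (hf0 : 0 ≤ f) (hsmall : ∀ x ∈ Ioc 0 a, f x ≤ M) (hlarge : ∀ x ∈ Ioi a, f x ≤ (x ^ 2)⁻¹) :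
    IntegrableOn f (Ioi 0) := by
  have hnorm : ∀ x, ‖f x‖ = f x := fun x => Real.norm_of_nonneg (hf0 x)
  rw [← Ioc_union_Ioi_eq_Ioi ha.le]
  refine .union ?_ ?_
  · refine Integrable.mono' (integrableOn_const (C := M) measure_Ioc_lt_top.ne)
      hf.aestronglyMeasurable ?_
    filter_upwards [ae_restrict_mem measurableSet_Ioc] with x hx
    exact (hnorm x).trans_le (hsmall x hx)
  · refine Integrable.mono' (integrableOn_Ioi_inv_sq ha) hf.aestronglyMeasurable ?_
    filter_upwards [ae_restrict_mem measurableSet_Ioi] with x hx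
    exact (hnorm x).trans_le (hlarge x hx)

lemma setIntegral_Ioi_zero_le_of_le_of_le_inv_sq {M : ℝ} (ha : 0 < a) (hf : Measurable f)
    (hf0 : 0 ≤ f) (hsmall : ∀ x ∈ Ioc 0 a, f x ≤ M) (hlarge : ∀ x ∈ Ioi a, f x ≤ (x ^ 2)⁻¹) :
    ∫ x in Ioi 0, f x ≤ a * M + a⁻¹ := by
  have hint := integrableOn_Ioi_zero_of_le_of_le_inv_sq ha hf hf0 hsmall hlarge
  rw [← Ioc_union_Ioi_eq_Ioi ha.le] at hint ⊢
  have hint_small := hint.mono_set subset_union_left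
  have hint_large := hint.mono_set subset_union_right
  rw [setIntegral_union Ioc_disjoint_Ioi_same measurableSet_Ioi hint_small hint_large]
  gcongr
  · calc ∫ x in Ioc 0 a, f x ≤ ∫ _ in Ioc 0 a, M :=
          setIntegral_mono_on hint_small (integrableOn_const measure_Ioc_lt_top.ne)
            measurableSet_Ioc hsmall
      _ = a * M := by simp [ha.le]
  · calc ∫ x in Ioi a, f x ≤ ∫ x in Ioi a, (x ^ 2)⁻¹ :=
          setIntegral_mono_on hint_large (integrableOn_Ioi_inv_sq ha) measurableSet_Ioi hlarge
      _ = a⁻¹ := integral_Ioi_inv_sq ha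

lemma mul_le_setIntegral_Ioi_zero {m : ℝ} (ha : 0 ≤ a) (hf : IntegrableOn f (Ioi 0))
    (hf0 : 0 ≤ f) (hsmall : ∀ x ∈ Ioc 0 a, m ≤ f x) :
    a * m ≤ ∫ x in Ioi 0, f x :=
  calc a * m = ∫ _ in Ioc 0 a, m := by simp [ha]
    _ ≤ ∫ x in Ioc 0 a, f x :=
      setIntegral_mono_on (integrableOn_const measure_Ioc_lt_top.ne)
        (hf.mono_set Ioc_subset_Ioi_self) measurableSet_Ioc hsmall
    _ ≤ ∫ x in Ioi 0, f x :=
      setIntegral_mono_set hf (.of_forall hf0) Ioc_subset_Ioi_self.eventuallyLE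

end

section

/-- `kernelG1 μ t |ξ|` is `Ĝ₁(t, ξ)`. -/
noncomputable def kernelG1 (μ t x : ℝ) : ℝ :=
  x⁻¹ * sin (x * t + (1 / 2) * x ^ 3 * t) * exp (-μ * x ^ 4 * t)

lemma measurable_kernelG1 (μ t : ℝ) : Measurable (kernelG1 μ t) := by
  unfold kernelG1; fun_prop

variable {μ t x : ℝ}

lemma exp_neg_mul_pow_four_mul_le_one (hμ : 0 ≤ μ) (ht : 0 ≤ t) : exp (-μ * x ^ 4 * t) ≤ 1 := by
  rw [exp_le_one_iff]
  have : 0 ≤ μ * x ^ 4 * t := by positivity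
  linarith

lemma abs_kernelG1_le (hμ : 0 ≤ μ) (ht : 0 ≤ t) : |kernelG1 μ t x| ≤ |x|⁻¹ := by
  rw [kernelG1, abs_mul, abs_mul, abs_inv, abs_of_pos (exp_pos _)]
  calc |x|⁻¹ * |sin _| * exp (-μ * x ^ 4 * t) ≤ |x|⁻¹ * 1 * 1 := by
        gcongr
        exacts [abs_sin_le_one _, exp_neg_mul_pow_four_mul_le_one hμ ht]
    _ = |x|⁻¹ := by ring

lemma kernelG1_mem_Icc (hμ : 0 ≤ μ) (ht : 1 ≤ t) (hx : x ∈ Ioc 0 t⁻¹) :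
    kernelG1 μ t x ∈ Icc (2 / π * exp (-μ) * t) (3 / 2 * t) := by
  obtain ⟨hx0, hxt⟩ := hx
  set θ := x * t + (1 / 2) * x ^ 3 * t with hθ
  have hxt1 : x * t ≤ 1 := by
    calc x * t ≤ t⁻¹ * t := by gcongr
      _ = 1 := inv_mul_cancel₀ (by positivity)
  have hx1 : x ≤ 1 := by nlinarith
  have hθ_lo : x * t ≤ θ := by
    have : 0 ≤ x ^ 3 * t := by positivity
    linarith
  have hθ_hi : θ ≤ 3 / 2 * (x * t) := by
    have : x ^ 3 * t ≤ x * t := by gcongr; exact pow_le_of_le_one hx0.le hx1 (by norm_num)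
    linarith
  have hsin_lo : 2 / π * (x * t) ≤ sin θ :=
    (by gcongr : 2 / π * (x * t) ≤ 2 / π * θ).trans
      (mul_le_sin (by positivity) (by linarith [pi_gt_three]))
  have hsin_nonneg : 0 ≤ sin θ := (by positivity : 0 ≤ 2 / π * (x * t)).trans hsin_lo
  have hsin_hi : sin θ ≤ 3 / 2 * (x * t) := (sin_le (by positivity)).trans hθ_hi
  have hexp_lo : exp (-μ) ≤ exp (-μ * x ^ 4 * t) := by
    have : x ^ 4 * t ≤ x * t := by gcongr; exact pow_le_of_le_one hx0.le hx1 (by norm_num)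
    gcongr
    nlinarith
  have hexp_hi := exp_neg_mul_pow_four_mul_le_one (x := x) hμ (zero_le_one.trans ht)
  have hkernel : kernelG1 μ t x = sin θ * exp (-μ * x ^ 4 * t) / x := by
    rw [kernelG1]; ring
  rw [hkernel, mem_Icc, le_div_iff₀ hx0, div_le_iff₀ hx0]
  constructor
  · calc 2 / π * exp (-μ) * t * x = 2 / π * (x * t) * exp (-μ) := by ring
      _ ≤ sin θ * exp (-μ * x ^ 4 * t) := by gcongr
  · calc sin θ * exp (-μ * x ^ 4 * t) ≤ 3 / 2 * (x * t) * 1 := by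
          gcongr
      _ = 3 / 2 * t * x := by ring

lemma integral_sq_kernelG1_abs_mem_Icc (hμ : 0 ≤ μ) (ht : 1 ≤ t) :
    ∫ ξ, kernelG1 μ t |ξ| ^ 2 ∈ Icc (2 * (2 / π * exp (-μ)) ^ 2 * t) (13 / 2 * t) := by
  have ht0 : 0 < t := zero_lt_one.trans_le ht
  have hmeas : Measurable fun x => kernelG1 μ t x ^ 2 := (measurable_kernelG1 μ t).pow_const 2
  have hnear_lo : ∀ x ∈ Ioc 0 t⁻¹, (2 / π * exp (-μ) * t) ^ 2 ≤ kernelG1 μ t x ^ 2 :=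
    fun x hx => pow_le_pow_left₀ (by positivity) (kernelG1_mem_Icc hμ ht hx).1 2
  have hnear_hi : ∀ x ∈ Ioc 0 t⁻¹, kernelG1 μ t x ^ 2 ≤ (3 / 2 * t) ^ 2 :=
    fun x hx => by
      obtain ⟨hlo, hhi⟩ := kernelG1_mem_Icc hμ ht hx
      exact pow_le_pow_left₀ ((by positivity : (0 : ℝ) ≤ _).trans hlo) hhi 2
  have hlarge : ∀ x ∈ Ioi t⁻¹, kernelG1 μ t x ^ 2 ≤ (x ^ 2)⁻¹ := fun x _ => by
    rw [← inv_pow, ← sq_abs, ← sq_abs x⁻¹, abs_inv]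
    exact pow_le_pow_left₀ (abs_nonneg _) (abs_kernelG1_le hμ ht0.le) 2
  have hint := integrableOn_Ioi_zero_of_le_of_le_inv_sq (inv_pos.2 ht0) hmeas
    (fun _ => sq_nonneg _) hnear_hi hlarge
  rw [integral_comp_abs (f := fun x => kernelG1 μ t x ^ 2), mem_Icc]
  constructor
  · have := mul_le_setIntegral_Ioi_zero (inv_pos.2 ht0).le hint (fun _ => sq_nonneg _) hnear_lo
    calc 2 * (2 / π * exp (-μ)) ^ 2 * t = 2 * (t⁻¹ * (2 / π * exp (-μ) * t) ^ 2) := by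
          field_simp
      _ ≤ _ := by gcongr
  · have := setIntegral_Ioi_zero_le_of_le_of_le_inv_sq (inv_pos.2 ht0) hmeas
      (fun _ => sq_nonneg _) hnear_hi hlarge
    calc 2 * ∫ x in Ioi 0, kernelG1 μ t x ^ 2 ≤ 2 * (t⁻¹ * (3 / 2 * t) ^ 2 + t⁻¹⁻¹) := by gcongr
      _ = 13 / 2 * t := by field_simp; ring

end

theorem G1_optimal_L2_growth_dim1 (μ : ℝ) (hμ : 0 < μ) :
    ∃ c₁ > (0 : ℝ), ∃ c₂ > (0 : ℝ), ∃ T₀ : ℝ, 1 ≤ T₀ ∧ ∀ t : ℝ, T₀ ≤ t →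
      c₁ * Real.sqrt t ≤
        (∫ ξ : ℝ,
          (|ξ|⁻¹ * Real.sin (|ξ| * t + (1 / 2) * |ξ| ^ 3 * t) * Real.exp (-μ * |ξ| ^ 4 * t)) ^ 2) ^
          ((1 : ℝ) / 2) ∧
      (∫ ξ : ℝ,
          (|ξ|⁻¹ * Real.sin (|ξ| * t + (1 / 2) * |ξ| ^ 3 * t) * Real.exp (-μ * |ξ| ^ 4 * t)) ^ 2) ^
          ((1 : ℝ) / 2) ≤ c₂ * Real.sqrt t := by
  refine ⟨√(2 * (2 / π * exp (-μ)) ^ 2), by positivity, √(13 / 2), by positivity, 1, le_rfl,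
    fun t ht => ?_⟩
  obtain ⟨hlo, hhi⟩ := integral_sq_kernelG1_abs_mem_Icc hμ.le ht
  rw [← sqrt_eq_rpow, ← sqrt_mul (by positivity), ← sqrt_mul (by positivity)]
  exact ⟨sqrt_le_sqrt hlo, sqrt_le_sqrt hhi⟩
end

section
/- Let n = 2, μ > 0, and define Ĝ₁(t,ξ) = |ξ|⁻¹ sin(|ξ|t + (1/2)|ξ|³t) e^{-μ|ξ|⁴t} for ξ ∈ ℝ². Then there exist constants c₁, c₂ > 0 and T₀ > 1 such that for all t ≥ T₀, c₁ √(ln t) ≤ (∫_{ℝ²} |Ĝ₁(t,ξ)|² dξ)^{1/2} ≤ c₂ √(ln t). -/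
/-!
In polar coordinates the squared norm is `2π ∫₀^∞ r⁻¹ sin² θ(r) e^{-2μ r⁴ t} dr` with phase
`θ(r) = r t + r³ t / 2`. For the upper bound split `(0, ∞)` at `1/t` and `1`: near the origin
`sin² θ ≤ θ² ≤ (3 r t / 2)²`, in the middle `r⁻¹` integrates to `log t`, and beyond `1` the factor
`e^{-2μ r}` decays. For the lower bound restrict to `[1/t, t^{-1/2}]`, where the damping is at
least `e^{-2μ}`, and write `sin² θ = (1 - cos 2θ) / 2`: the mean part gives `(log t) / 4`, while the
oscillating part is `O(1)` by an integration by parts, because the derivative of the phase `2θ`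
is at least `2t`.
-/

open MeasureTheory Set Real

theorem integral_fun_norm_euclideanSpace_fin_two (f : ℝ → ℝ) :
    ∫ ξ : EuclideanSpace ℝ (Fin 2), f ‖ξ‖ = 2 * π * ∫ r in Ioi (0 : ℝ), r * f r := by
  rw [integral_fun_norm_addHaar, measureReal_def, EuclideanSpace.volume_ball_fin_two]
  simp [pi_pos.le]
  ring

theorem abs_integral_mul_deriv_le_two_mul {u u' v v' : ℝ → ℝ} {a b : ℝ} (hab : a ≤ b)
    (hu : ∀ x ∈ uIcc a b, HasDerivAt u (u' x) x) (hv : ∀ x ∈ uIcc a b, HasDerivAt v (v' x) x)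
    (hu'i : IntervalIntegrable u' volume a b) (hv'i : IntervalIntegrable v' volume a b)
    (hu' : ∀ x ∈ Icc a b, u' x ≤ 0) (hub : 0 ≤ u b) (hv1 : ∀ x ∈ Icc a b, |v x| ≤ 1) :
    |∫ x in a..b, u x * v' x| ≤ 2 * u a := by
  have hvc : ContinuousOn v (uIcc a b) := fun x hx => (hv x hx).continuousAt.continuousWithinAt
  have hrem : |∫ x in a..b, u' x * v x| ≤ u a - u b := by
    calc |∫ x in a..b, u' x * v x| ≤ ∫ x in a..b, |u' x * v x| :=
          intervalIntegral.abs_integral_le_integral_abs hab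
      _ ≤ ∫ x in a..b, -u' x := by
          refine intervalIntegral.integral_mono_on hab (hu'i.mul_continuousOn hvc).abs hu'i.neg ?_
          intro x hx
          rw [abs_mul, abs_of_nonpos (hu' x hx)]
          exact mul_le_of_le_one_right (neg_nonneg.2 (hu' x hx)) (hv1 x hx)
      _ = u a - u b := by
          rw [intervalIntegral.integral_neg, intervalIntegral.integral_eq_sub_of_hasDerivAt hu hu'i]
          ring
  have hua : 0 ≤ u a := by linarith [abs_nonneg (∫ x in a..b, u' x * v x)]
  have hb : |u b * v b| ≤ u b := by
    rw [abs_mul, abs_of_nonneg hub]; exact mul_le_of_le_one_right hub (hv1 b (right_mem_Icc.2 hab))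
  have ha : |u a * v a| ≤ u a := by
    rw [abs_mul, abs_of_nonneg hua]; exact mul_le_of_le_one_right hua (hv1 a (left_mem_Icc.2 hab))
  rw [intervalIntegral.integral_mul_deriv_eq_deriv_mul hu hv hu'i hv'i]
  rw [abs_le] at hrem ha hb ⊢
  constructor <;> linarith

theorem rpow_one_half_mem_Icc_of_mem_Icc_mul {a b L X : ℝ} (hL : 0 ≤ L)
    (hX : X ∈ Icc (a * L) (b * L)) : X ^ (1 / 2 : ℝ) ∈ Icc (√a * √L) (√b * √L) := by
  rw [← sqrt_eq_rpow, ← sqrt_mul' a hL, ← sqrt_mul' b hL]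
  exact ⟨sqrt_le_sqrt hX.1, sqrt_le_sqrt hX.2⟩

theorem abs_integral_cos_two_mul_div_le {t a b : ℝ} (ht : 0 < t) (ha : 0 < a) (hab : a ≤ b) :
    |∫ r in a..b, cos (2 * (r * t + 1 / 2 * r ^ 3 * t)) / r| ≤ 1 / (a * t) := by
  have hpos : ∀ x ∈ uIcc a b, 0 < x := fun x hx => ha.trans_le (uIcc_of_le hab ▸ hx).1
  -- `cos (2θ) / r = u · (sin (2θ))'` with `u = (r · (2θ)')⁻¹` positive and decreasing
  have hu : ∀ x ∈ uIcc a b, HasDerivAt (fun r => (2 * r * t + 3 * r ^ 3 * t)⁻¹)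
      (-(2 * t + 9 * x ^ 2 * t) / (2 * x * t + 3 * x ^ 3 * t) ^ 2) x := by
    intro x hx
    have hx := hpos x hx
    have hp : HasDerivAt (fun r => 2 * r * t + 3 * r ^ 3 * t) (2 * t + 9 * x ^ 2 * t) x := by
      exact ((((hasDerivAt_id' x).const_mul 2).mul_const t).add
        (((hasDerivAt_pow 3 x).const_mul 3).mul_const t)).congr_deriv (by ring)
    exact hp.inv (by positivity)
  have hv : ∀ x ∈ uIcc a b, HasDerivAt (fun r => sin (2 * (r * t + 1 / 2 * r ^ 3 * t)))
      (cos (2 * (x * t + 1 / 2 * x ^ 3 * t)) * (2 * t + 3 * x ^ 2 * t)) x := by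
    intro x _
    have hp : HasDerivAt (fun r => 2 * (r * t + 1 / 2 * r ^ 3 * t)) (2 * t + 3 * x ^ 2 * t) x := by
      exact ((((hasDerivAt_id' x).mul_const t).add
        (((hasDerivAt_pow 3 x).const_mul (1 / 2)).mul_const t)).const_mul 2).congr_deriv (by ring)
    exact hp.sin
  have hibp := abs_integral_mul_deriv_le_two_mul hab hu hv
    (ContinuousOn.intervalIntegrable (by
      refine ContinuousOn.div (by fun_prop) (by fun_prop) fun x hx => ?_
      have := hpos x hx; positivity))
    ((by fun_prop : Continuous fun x =>
      cos (2 * (x * t + 1 / 2 * x ^ 3 * t)) * (2 * t + 3 * x ^ 2 * t)).intervalIntegrable _ _)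
    (fun x hx => by
      have : 0 < x := ha.trans_le hx.1
      exact div_nonpos_of_nonpos_of_nonneg (by nlinarith [sq_nonneg x]) (sq_nonneg _))
    (by have := ha.trans_le hab; positivity)
    (fun x _ => abs_sin_le_one _)
  rw [intervalIntegral.integral_congr (g := fun r => cos (2 * (r * t + 1 / 2 * r ^ 3 * t)) / r)
    fun x hx => ?_] at hibp
  · refine hibp.trans ?_
    rw [← div_eq_mul_inv, div_le_div_iff₀ (by positivity) (by positivity)]
    nlinarith [pow_pos ha 3]
  · have := hpos x hx
    field_simp

theorem le_integral_inv_mul_sin_sq {t a b : ℝ} (ht : 0 < t) (ha : 0 < a) (hab : a ≤ b) :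
    (log (b / a) - 1 / (a * t)) / 2 ≤ ∫ r in a..b, r⁻¹ * sin (r * t + 1 / 2 * r ^ 3 * t) ^ 2 := by
  have hpos : ∀ x ∈ uIcc a b, 0 < x := fun x hx => ha.trans_le (uIcc_of_le hab ▸ hx).1
  have hinv : IntervalIntegrable (fun r : ℝ => r⁻¹) volume a b :=
    intervalIntegral.intervalIntegrable_inv (fun x hx => (hpos x hx).ne') continuousOn_id
  have hcos : IntervalIntegrable (fun r => cos (2 * (r * t + 1 / 2 * r ^ 3 * t)) / r) volume a b :=
    ContinuousOn.intervalIntegrable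
      (ContinuousOn.div (by fun_prop) continuousOn_id fun x hx => (hpos x hx).ne')
  have hsplit : ∫ r in a..b, r⁻¹ * sin (r * t + 1 / 2 * r ^ 3 * t) ^ 2 =
      (∫ r in a..b, r⁻¹) / 2 - (∫ r in a..b, cos (2 * (r * t + 1 / 2 * r ^ 3 * t)) / r) / 2 := by
    rw [← intervalIntegral.integral_div, ← intervalIntegral.integral_div,
      ← intervalIntegral.integral_sub (hinv.div_const _) (hcos.div_const _)]
    refine intervalIntegral.integral_congr fun x _ => ?_
    rw [sin_sq_eq_half_sub]
    ring
  rw [hsplit, integral_inv_of_pos ha (ha.trans_le hab)]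
  have := (abs_le.1 (abs_integral_cos_two_mul_div_le ht ha hab)).2
  linarith

-- the symbol `Ĝ₁(t, ξ)` as a function of `r = |ξ|`
noncomputable def G1hat (μ t r : ℝ) : ℝ :=
  r⁻¹ * sin (r * t + 1 / 2 * r ^ 3 * t) * exp (-μ * r ^ 4 * t)

section G1hat

variable {μ t r : ℝ}

theorem mul_G1hat_sq (hr : r ≠ 0) :
    r * G1hat μ t r ^ 2 =
      r⁻¹ * sin (r * t + 1 / 2 * r ^ 3 * t) ^ 2 * exp (-(2 * μ) * r ^ 4 * t) := by
  rw [G1hat, mul_pow, mul_pow, ← exp_nat_mul]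
  field_simp
  ring_nf

theorem mul_G1hat_sq_nonneg (hr : 0 ≤ r) : 0 ≤ r * G1hat μ t r ^ 2 := by positivity

theorem mul_G1hat_sq_le_mul_sin_sq (hμ : 0 ≤ μ) (ht : 0 ≤ t) (hr : 0 < r) :
    r * G1hat μ t r ^ 2 ≤ r⁻¹ * sin (r * t + 1 / 2 * r ^ 3 * t) ^ 2 := by
  rw [mul_G1hat_sq hr.ne']
  exact mul_le_of_le_one_right (by positivity)
    (exp_le_one_iff.2 (by rw [neg_mul, neg_mul, neg_nonpos]; positivity))

theorem mul_G1hat_sq_le_inv (hμ : 0 ≤ μ) (ht : 0 ≤ t) (hr : 0 < r) :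
    r * G1hat μ t r ^ 2 ≤ r⁻¹ :=
  (mul_G1hat_sq_le_mul_sin_sq hμ ht hr).trans
    (mul_le_of_le_one_right (inv_pos.2 hr).le (sin_sq_le_one _))

theorem mul_G1hat_sq_le_mul (hμ : 0 ≤ μ) (ht : 0 ≤ t) (hr : 0 < r) (hr1 : r ≤ 1) :
    r * G1hat μ t r ^ 2 ≤ 9 / 4 * t ^ 2 * r := by
  have hphase : |r * t + 1 / 2 * r ^ 3 * t| ≤ 3 / 2 * (r * t) := by
    rw [abs_of_nonneg (by positivity)]
    nlinarith [pow_le_one₀ hr.le hr1 (n := 2), mul_nonneg hr.le ht]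
  calc r * G1hat μ t r ^ 2 ≤ r⁻¹ * sin (r * t + 1 / 2 * r ^ 3 * t) ^ 2 :=
        mul_G1hat_sq_le_mul_sin_sq hμ ht hr
    _ ≤ r⁻¹ * (3 / 2 * (r * t)) ^ 2 := mul_le_mul_of_nonneg_left
        (sin_sq_le_sq.trans (sq_le_sq' (abs_le.1 hphase).1 (abs_le.1 hphase).2)) (inv_pos.2 hr).le
    _ = 9 / 4 * t ^ 2 * r := by field_simp; ring

theorem mul_G1hat_sq_le_exp (hμ : 0 ≤ μ) (ht : 1 ≤ t) (hr : 1 ≤ r) :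
    r * G1hat μ t r ^ 2 ≤ exp (-(2 * μ) * r) := by
  rw [mul_G1hat_sq (by positivity)]
  have hr4 : r ≤ r ^ 4 * t := by nlinarith [le_self_pow₀ hr (show 4 ≠ 0 by norm_num)]
  have hdecay : exp (-(2 * μ) * r ^ 4 * t) ≤ exp (-(2 * μ) * r) := exp_le_exp.2 (by nlinarith)
  calc _ ≤ 1 * 1 * exp (-(2 * μ) * r) := by
        gcongr
        · exact inv_le_one_of_one_le₀ hr
        · exact sin_sq_le_one _
    _ = _ := by ring

theorem exp_mul_le_mul_G1hat_sq (hμ : 0 ≤ μ) (hr : 0 < r) (hrt : r ^ 4 * t ≤ 1) :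
    exp (-(2 * μ)) * (r⁻¹ * sin (r * t + 1 / 2 * r ^ 3 * t) ^ 2) ≤ r * G1hat μ t r ^ 2 := by
  rw [mul_G1hat_sq hr.ne', mul_comm]
  gcongr
  nlinarith

theorem integrableOn_mul_G1hat_sq (hμ : 0 < μ) (ht : 1 ≤ t) :
    IntegrableOn (fun r => r * G1hat μ t r ^ 2) (Ioi 0) := by
  have hmeas : Measurable fun r => r * G1hat μ t r ^ 2 := by unfold G1hat; fun_prop
  have hnear : IntegrableOn (fun r => r * G1hat μ t r ^ 2) (Ioc 0 1) := by
    refine Measure.integrableOn_of_bounded (M := 9 / 4 * t ^ 2) measure_Ioc_lt_top.ne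
      hmeas.aestronglyMeasurable ?_
    filter_upwards [ae_restrict_mem measurableSet_Ioc] with r ⟨hr0, hr1⟩
    rw [Real.norm_of_nonneg (mul_G1hat_sq_nonneg hr0.le)]
    calc _ ≤ 9 / 4 * t ^ 2 * r := mul_G1hat_sq_le_mul hμ.le (by linarith) hr0 hr1
      _ ≤ 9 / 4 * t ^ 2 := mul_le_of_le_one_right (by positivity) hr1
  have hfar : IntegrableOn (fun r => r * G1hat μ t r ^ 2) (Ioi 1) := by
    refine (exp_neg_integrableOn_Ioi 1 (by positivity : 0 < 2 * μ)).mono'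
      hmeas.aestronglyMeasurable.restrict ?_
    filter_upwards [ae_restrict_mem measurableSet_Ioi] with r hr
    rw [Real.norm_of_nonneg (mul_G1hat_sq_nonneg (zero_le_one.trans hr.le))]
    exact mul_G1hat_sq_le_exp hμ.le ht hr.le
  rw [← Ioc_union_Ioi_eq_Ioi zero_le_one]
  exact hnear.union hfar

theorem setIntegral_mul_G1hat_sq_le (hμ : 0 < μ) (ht : 1 ≤ t) :
    ∫ r in Ioi 0, r * G1hat μ t r ^ 2 ≤ 9 / 8 + log t + 1 / (2 * μ) := by
  set f := fun r => r * G1hat μ t r ^ 2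
  have ht0 : 0 < t := zero_lt_one.trans_le ht
  have ht1 : t⁻¹ ≤ 1 := inv_le_one_of_one_le₀ ht
  have hf := integrableOn_mul_G1hat_sq hμ ht
  have h₁ : IntegrableOn f (Ioc 0 t⁻¹) := hf.mono_set fun x hx => hx.1
  have h₂ : IntegrableOn f (Ioc t⁻¹ 1) := hf.mono_set fun x hx => (inv_pos.2 ht0).trans hx.1
  have h₃ : IntegrableOn f (Ioi 1) := hf.mono_set (Ioi_subset_Ioi zero_le_one)
  have hsplit : ∫ r in Ioi 0, f r =
      (∫ r in Ioc 0 t⁻¹, f r) + (∫ r in Ioc t⁻¹ 1, f r) + ∫ r in Ioi 1, f r := by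
    rw [← setIntegral_union (Ioc_disjoint_Ioc_of_le le_rfl) measurableSet_Ioc h₁ h₂,
      Ioc_union_Ioc_eq_Ioc (inv_pos.2 ht0).le ht1,
      ← setIntegral_union (Ioc_disjoint_Ioi le_rfl) measurableSet_Ioi (hf.mono_set
        fun x hx => hx.1) h₃, Ioc_union_Ioi_eq_Ioi zero_le_one]
  have hsmall : ∫ r in Ioc 0 t⁻¹, f r ≤ 9 / 8 :=
    calc ∫ r in Ioc 0 t⁻¹, f r ≤ ∫ r in Ioc 0 t⁻¹, 9 / 4 * t ^ 2 * r :=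
          setIntegral_mono_on h₁ (by fun_prop : Continuous _).integrableOn_Ioc measurableSet_Ioc
            fun r hr => mul_G1hat_sq_le_mul hμ.le ht0.le hr.1 (hr.2.trans ht1)
      _ = 9 / 8 := by
          rw [← intervalIntegral.integral_of_le (inv_pos.2 ht0).le,
            intervalIntegral.integral_const_mul, integral_id]
          field_simp
          ring
  have hmiddle : ∫ r in Ioc t⁻¹ 1, f r ≤ log t :=
    calc ∫ r in Ioc t⁻¹ 1, f r ≤ ∫ r in Ioc t⁻¹ 1, r⁻¹ := by
          refine setIntegral_mono_on h₂ ?_ measurableSet_Ioc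
            fun r hr => mul_G1hat_sq_le_inv hμ.le ht0.le ((inv_pos.2 ht0).trans hr.1)
          rw [← intervalIntegrable_iff_integrableOn_Ioc_of_le ht1]
          exact intervalIntegral.intervalIntegrable_inv
            (fun x hx => ((inv_pos.2 ht0).trans_le (uIcc_of_le ht1 ▸ hx).1).ne') continuousOn_id
      _ = log t := by
          rw [← intervalIntegral.integral_of_le ht1, integral_inv_of_pos (inv_pos.2 ht0)
            zero_lt_one, one_div, inv_inv]
  have hlarge : ∫ r in Ioi 1, f r ≤ 1 / (2 * μ) :=
    calc ∫ r in Ioi 1, f r ≤ ∫ r in Ioi 1, exp (-(2 * μ) * r) :=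
          setIntegral_mono_on h₃ (exp_neg_integrableOn_Ioi 1 (by positivity)) measurableSet_Ioi
            fun r hr => mul_G1hat_sq_le_exp hμ.le ht (le_of_lt hr)
      _ = exp (-(2 * μ)) / (2 * μ) := by
          rw [integral_exp_mul_Ioi (by linarith), mul_one, neg_div_neg_eq]
      _ ≤ 1 / (2 * μ) := by
          gcongr
          exact exp_le_one_iff.2 (by linarith)
  rw [hsplit]
  linarith

theorem le_setIntegral_mul_G1hat_sq (hμ : 0 < μ) (ht : 1 ≤ t) :
    exp (-(2 * μ)) * (log t / 2 - 1) / 2 ≤ ∫ r in Ioi 0, r * G1hat μ t r ^ 2 := by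
  have ht0 : 0 < t := zero_lt_one.trans_le ht
  have ha : 0 < t⁻¹ := inv_pos.2 ht0
  have hab : t⁻¹ ≤ (√t)⁻¹ := inv_anti₀ (sqrt_pos.2 ht0) (sqrt_le_self_iff.2 (Or.inr ht))
  have hb4 : (√t)⁻¹ ^ 4 * t = t⁻¹ := by
    rw [inv_pow, show 4 = 2 * 2 from rfl, pow_mul, sq_sqrt ht0.le]
    field_simp
  have hf := integrableOn_mul_G1hat_sq hμ ht
  have hg : IntegrableOn (fun r => exp (-(2 * μ)) * (r⁻¹ * sin (r * t + 1 / 2 * r ^ 3 * t) ^ 2))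
      (Ioc t⁻¹ (√t)⁻¹) :=
    (ContinuousOn.integrableOn_Icc (ContinuousOn.mul continuousOn_const (ContinuousOn.mul
      (continuousOn_inv₀.mono fun x hx => (ha.trans_le hx.1).ne') (by fun_prop)))).mono_set
      Ioc_subset_Icc_self
  calc exp (-(2 * μ)) * (log t / 2 - 1) / 2
      = exp (-(2 * μ)) * ((log ((√t)⁻¹ / t⁻¹) - 1 / (t⁻¹ * t)) / 2) := by
        rw [inv_div_inv, div_sqrt, log_sqrt ht0.le, inv_mul_cancel₀ ht0.ne']
        ring
    _ ≤ exp (-(2 * μ)) * ∫ r in t⁻¹..(√t)⁻¹, r⁻¹ * sin (r * t + 1 / 2 * r ^ 3 * t) ^ 2 := by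
        gcongr
        exact le_integral_inv_mul_sin_sq ht0 ha hab
    _ = ∫ r in Ioc t⁻¹ (√t)⁻¹, exp (-(2 * μ)) * (r⁻¹ * sin (r * t + 1 / 2 * r ^ 3 * t) ^ 2) := by
        rw [intervalIntegral.integral_of_le hab, integral_const_mul]
    _ ≤ ∫ r in Ioc t⁻¹ (√t)⁻¹, r * G1hat μ t r ^ 2 := by
        refine setIntegral_mono_on hg (hf.mono_set fun x hx => ha.trans hx.1) measurableSet_Ioc
          fun r hr => exp_mul_le_mul_G1hat_sq hμ.le (ha.trans hr.1) ?_
        calc r ^ 4 * t ≤ (√t)⁻¹ ^ 4 * t := by gcongr; exacts [(ha.trans hr.1).le, hr.2]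
          _ ≤ 1 := hb4 ▸ inv_le_one_of_one_le₀ ht
    _ ≤ ∫ r in Ioi 0, r * G1hat μ t r ^ 2 :=
        setIntegral_mono_set hf (ae_restrict_of_forall_mem measurableSet_Ioi
          fun r hr => mul_G1hat_sq_nonneg (le_of_lt hr))
          (Ioc_subset_Ioi_self.trans (Ioi_subset_Ioi ha.le)).eventuallyLE

end G1hat

theorem G1_optimal_L2_log_growth_dim2 (μ : ℝ) (hμ : 0 < μ) :
    ∃ c₁ > (0 : ℝ), ∃ c₂ > (0 : ℝ), ∃ T₀ : ℝ, 1 < T₀ ∧ ∀ t : ℝ, T₀ ≤ t →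
      c₁ * Real.sqrt (Real.log t) ≤
        (∫ ξ : EuclideanSpace ℝ (Fin 2),
          (‖ξ‖⁻¹ * Real.sin (‖ξ‖ * t + (1 / 2) * ‖ξ‖ ^ 3 * t) * Real.exp (-μ * ‖ξ‖ ^ 4 * t)) ^ 2) ^
          ((1 : ℝ) / 2) ∧
      (∫ ξ : EuclideanSpace ℝ (Fin 2),
          (‖ξ‖⁻¹ * Real.sin (‖ξ‖ * t + (1 / 2) * ‖ξ‖ ^ 3 * t) * Real.exp (-μ * ‖ξ‖ ^ 4 * t)) ^ 2) ^
          ((1 : ℝ) / 2) ≤ c₂ * Real.sqrt (Real.log t) := by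
  refine ⟨√(2 * π * (exp (-(2 * μ)) / 8)), by positivity, √(2 * π * (17 / 8 + 1 / (2 * μ))),
    by positivity, exp 4, one_lt_exp_iff.2 (by norm_num), fun t ht => ?_⟩
  have ht1 : 1 ≤ t := (one_le_exp (by norm_num)).trans ht
  have hlog : 4 ≤ log t := (le_log_iff_exp_le (by positivity)).2 ht
  have hlower := le_setIntegral_mul_G1hat_sq hμ ht1
  have hupper := setIntegral_mul_G1hat_sq_le hμ ht1
  -- the integrand is `G1hat μ t ‖ξ‖ ^ 2` up to unfolding
  erw [integral_fun_norm_euclideanSpace_fin_two fun r => G1hat μ t r ^ 2]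
  refine rpow_one_half_mem_Icc_of_mem_Icc_mul (by linarith) ⟨?_, ?_⟩
  · have : exp (-(2 * μ)) / 8 * log t ≤ ∫ r in Ioi 0, r * G1hat μ t r ^ 2 := by
      nlinarith [exp_pos (-(2 * μ))]
    nlinarith [pi_pos]
  · have : 1 / (2 * μ) ≤ 1 / (2 * μ) * log t := le_mul_of_one_le_right (by positivity) (by linarith)
    nlinarith [pi_pos]
end

section
/- Let n ≥ 3, μ > 0, and define Ĝ₁(t,ξ) = |ξ|⁻¹ sin(|ξ|t + (1/2)|ξ|³t) e^{-μ|ξ|⁴t} for ξ ∈ ℝⁿ. Then there exist constants c₁, c₂ > 0 and T₀ ≥ 1 such that for all t ≥ T₀, c₁ t^{-(n-2)/8} ≤ (∫_{ℝⁿ} |Ĝ₁(t,ξ)|² dξ)^{1/2} ≤ c₂ t^{-(n-2)/8}. -/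
open MeasureTheory Real Set

/-!
In polar coordinates `‖Ĝ₁(t)‖₂² = κₙ ∫₀^∞ r^(n-3) sin²(r t + r³ t / 2) exp(-2μ r⁴ t) dr`.
Bounding `sin² ≤ 1` leaves a Gamma integral, which is `≍ t^(-(n-2)/4)` by the scaling
`r ↦ t^(-1/4) r`. For the lower bound, restrict to `r ∈ (a, 2a]` with `a = t^(-1/4)`: there the
damping factor is at least `exp(-32μ)` and `r^(n-3) ≥ a^(n-3)`, while the phase has derivative
`≥ 2t` and increasing, so by van der Corput's lemma `sin²` averages to `1/2` up to `O(1/t)`, and the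
window contributes `≳ a^(n-2) = t^(-(n-2)/4)`.
-/

theorem abs_integral_cos_le_of_deriv_monotone {φ φ' φ'' : ℝ → ℝ} {a b : ℝ} (hab : a ≤ b)
    (hφ : ∀ x ∈ Icc a b, HasDerivAt φ (φ' x) x) (hφ' : ∀ x ∈ Icc a b, HasDerivAt φ' (φ'' x) x)
    (hφ''_cont : ContinuousOn φ'' (Icc a b)) (hφ''_nonneg : ∀ x ∈ Icc a b, 0 ≤ φ'' x)
    (hφ'_pos : 0 < φ' a) :
    |∫ x in a..b, cos (φ x)| ≤ 2 / φ' a := by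
  have hφ_cont : ContinuousOn φ (Icc a b) := fun x hx => (hφ x hx).continuousAt.continuousWithinAt
  have hφ'_cont : ContinuousOn φ' (Icc a b) :=
    fun x hx => (hφ' x hx).continuousAt.continuousWithinAt
  have hφ'_mono : MonotoneOn φ' (Icc a b) :=
    monotoneOn_of_hasDerivWithinAt_nonneg (convex_Icc a b) hφ'_cont
      (fun x hx => (hφ' x (interior_subset hx)).hasDerivWithinAt)
      (fun x hx => hφ''_nonneg x (interior_subset hx))
  have hpos : ∀ x ∈ Icc a b, 0 < φ' x := fun x hx =>
    hφ'_pos.trans_le (hφ'_mono (left_mem_Icc.2 hab) hx hx.1)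
  -- Integrate by parts against `(sin ∘ φ)' = φ' · cos ∘ φ`; the error term is controlled by the
  -- total variation of `1 / φ'`, which telescopes because `φ'` is monotone.
  set g : ℝ → ℝ := fun x => sin (φ x) * φ'' x / φ' x ^ 2
  set h : ℝ → ℝ := fun x => φ'' x / φ' x ^ 2
  have hg_cont : ContinuousOn g (uIcc a b) := by
    rw [uIcc_of_le hab]
    exact ((continuous_sin.comp_continuousOn hφ_cont).mul hφ''_cont).div (hφ'_cont.pow 2)
      fun x hx => (pow_pos (hpos x hx) 2).ne'
  have hh_cont : ContinuousOn h (uIcc a b) := by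
    rw [uIcc_of_le hab]
    exact hφ''_cont.div (hφ'_cont.pow 2) fun x hx => (pow_pos (hpos x hx) 2).ne'
  have hcos_cont : ContinuousOn (fun x => cos (φ x)) (uIcc a b) := by
    rw [uIcc_of_le hab]; exact continuous_cos.comp_continuousOn hφ_cont
  have h_parts : ∫ x in a..b, cos (φ x)
      = (sin (φ b) / φ' b - sin (φ a) / φ' a) + ∫ x in a..b, g x := by
    have hderiv : ∀ x ∈ uIcc a b, HasDerivAt (fun x => sin (φ x) / φ' x) (cos (φ x) - g x) x := by
      intro x hx
      rw [uIcc_of_le hab] at hx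
      refine (((hφ x hx).sin).div (hφ' x hx) (hpos x hx).ne').congr_deriv ?_
      have := (hpos x hx).ne'
      simp only [g]
      field_simp
    rw [← intervalIntegral.integral_eq_sub_of_hasDerivAt hderiv
        (hcos_cont.sub hg_cont).intervalIntegrable,
      intervalIntegral.integral_sub hcos_cont.intervalIntegrable hg_cont.intervalIntegrable]
    ring
  have h_var : ∫ x in a..b, h x = 1 / φ' a - 1 / φ' b := by
    have hderiv : ∀ x ∈ uIcc a b, HasDerivAt (fun x => -(φ' x)⁻¹) (h x) x := by
      intro x hx
      rw [uIcc_of_le hab] at hx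
      exact ((hφ' x hx).inv (hpos x hx).ne').neg.congr_deriv (by simp only [h]; ring)
    rw [intervalIntegral.integral_eq_sub_of_hasDerivAt hderiv hh_cont.intervalIntegrable]
    simp only [one_div]
    ring
  have h_err : |∫ x in a..b, g x| ≤ 1 / φ' a - 1 / φ' b := by
    rw [← h_var, ← Real.norm_eq_abs]
    refine intervalIntegral.norm_integral_le_of_norm_le hab
      (Filter.Eventually.of_forall fun x hx => ?_) hh_cont.intervalIntegrable
    have hx' : x ∈ Icc a b := Ioc_subset_Icc_self hx
    rw [Real.norm_eq_abs, abs_div, abs_mul, abs_of_nonneg (hφ''_nonneg x hx'), abs_sq]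
    show _ ≤ φ'' x / φ' x ^ 2
    gcongr
    exact mul_le_of_le_one_left (hφ''_nonneg x hx') (abs_sin_le_one _)
  have h_bdry : ∀ x ∈ Icc a b, |sin (φ x) / φ' x| ≤ 1 / φ' x := fun x hx => by
    rw [abs_div, abs_of_pos (hpos x hx)]
    gcongr
    · exact (hpos x hx).le
    · exact abs_sin_le_one _
  calc |∫ x in a..b, cos (φ x)|
      ≤ |sin (φ b) / φ' b| + |sin (φ a) / φ' a| + |∫ x in a..b, g x| := by
        rw [h_parts]
        exact (abs_add_le _ _).trans (add_le_add_left (abs_sub _ _) _)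
    _ ≤ 1 / φ' b + 1 / φ' a + (1 / φ' a - 1 / φ' b) := by
        gcongr
        · exact h_bdry b (right_mem_Icc.2 hab)
        · exact h_bdry a (left_mem_Icc.2 hab)
    _ = 2 / φ' a := by ring

lemma sub_le_integral_sin_sq_phase {t a b : ℝ} (ht : 0 < t) (ha : 0 ≤ a) (hab : a ≤ b) :
    (b - a) / 2 - 1 / (2 * t) ≤ ∫ r in a..b, sin (r * t + 1 / 2 * r ^ 3 * t) ^ 2 := by
  have h_cos : |∫ r in a..b, cos (2 * (r * t + 1 / 2 * r ^ 3 * t))| ≤ 1 / t := by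
    refine (abs_integral_cos_le_of_deriv_monotone (φ' := fun r => 2 * t + 3 * t * r ^ 2)
      (φ'' := fun r => 6 * t * r) hab (fun r _ => ?_) (fun r _ => ?_) (by fun_prop)
      (fun r hr => by have := ha.trans hr.1; positivity) (by positivity)).trans ?_
    · exact ((((hasDerivAt_id r).mul_const t).add
        (((hasDerivAt_pow 3 r).const_mul (1 / 2)).mul_const t)).const_mul 2).congr_deriv
          (by simp only [one_mul, one_div, Nat.cast_ofNat, Nat.add_one_sub_one]; ring)
    · exact ((hasDerivAt_pow 2 r).const_mul (3 * t)).const_add (2 * t) |>.congr_deriv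
        (by simp only [Nat.cast_ofNat, Nat.add_one_sub_one, pow_one]; ring)
    · rw [div_le_div_iff₀ (by positivity) ht]
      nlinarith [sq_nonneg a]
  have h_int : IntervalIntegrable (fun r => cos (2 * (r * t + 1 / 2 * r ^ 3 * t))) volume a b :=
    (by fun_prop : Continuous _).intervalIntegrable _ _
  simp_rw [sin_sq_eq_half_sub]
  rw [intervalIntegral.integral_sub intervalIntegrable_const (h_int.div_const 2),
    intervalIntegral.integral_const, intervalIntegral.integral_div, smul_eq_mul]
  have := (abs_le.1 h_cos).2
  have : 1 / (2 * t) = 1 / t / 2 := by ring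
  linarith

noncomputable def G₁hat (μ t r : ℝ) : ℝ :=
  r⁻¹ * sin (r * t + 1 / 2 * r ^ 3 * t) * exp (-μ * r ^ 4 * t)

lemma pow_add_two_mul_G₁hat_sq (k : ℕ) (μ t : ℝ) {r : ℝ} (hr : r ≠ 0) :
    r ^ (k + 2) * G₁hat μ t r ^ 2
      = r ^ k * sin (r * t + 1 / 2 * r ^ 3 * t) ^ 2 * exp (-(2 * μ * t) * r ^ 4) := by
  have h_exp : exp (-μ * r ^ 4 * t) ^ 2 = exp (-(2 * μ * t) * r ^ 4) := by
    rw [← exp_nat_mul]; ring_nf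
  rw [G₁hat, mul_pow, mul_pow, h_exp]
  field_simp
  ring

lemma pow_mul_G₁hat_sq_le {n : ℕ} (hn : 3 ≤ n) (μ t : ℝ) {r : ℝ} (hr : 0 < r) :
    r ^ (n - 1) * G₁hat μ t r ^ 2 ≤ r ^ ((n : ℝ) - 3) * exp (-(2 * μ * t) * r ^ (4 : ℝ)) := by
  obtain ⟨k, rfl⟩ := Nat.exists_eq_add_of_le' hn
  rw [show k + 3 - 1 = k + 2 by omega, pow_add_two_mul_G₁hat_sq k μ t hr.ne']
  have : r ^ ((↑(k + 3) : ℝ) - 3) = r ^ k := by push_cast; simp [← rpow_natCast]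
  rw [this, show (4 : ℝ) = (4 : ℕ) from rfl, rpow_natCast]
  exact mul_le_mul_of_nonneg_right (mul_le_of_le_one_right (by positivity) (sin_sq_le_one _))
    (exp_pos _).le

lemma integrableOn_pow_mul_G₁hat_sq {n : ℕ} (hn : 3 ≤ n) {μ t : ℝ} (hμ : 0 < μ) (ht : 0 < t) :
    IntegrableOn (fun r => r ^ (n - 1) * G₁hat μ t r ^ 2) (Ioi 0) := by
  have hn' : (3 : ℝ) ≤ n := by exact_mod_cast hn
  refine Integrable.mono' (integrableOn_rpow_mul_exp_neg_mul_rpow (s := n - 3) (p := 4)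
    (by linarith) (by norm_num) (by positivity : 0 < 2 * μ * t)) (by unfold G₁hat; fun_prop) ?_
  filter_upwards [ae_restrict_mem measurableSet_Ioi] with r hr
  rw [Real.norm_of_nonneg (mul_nonneg (pow_nonneg (le_of_lt hr) _) (sq_nonneg _))]
  exact pow_mul_G₁hat_sq_le hn μ t hr

lemma integral_pow_mul_G₁hat_sq_le {n : ℕ} (hn : 3 ≤ n) {μ t : ℝ} (hμ : 0 < μ) (ht : 0 < t) :
    ∫ r in Ioi 0, r ^ (n - 1) * G₁hat μ t r ^ 2
      ≤ (2 * μ) ^ (-((n : ℝ) - 2) / 4) * Gamma (((n : ℝ) - 2) / 4) / 4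
        * t ^ (-((n : ℝ) - 2) / 4) := by
  have hn' : (3 : ℝ) ≤ n := by exact_mod_cast hn
  have h_gamma : ∫ r in Ioi 0, r ^ ((n : ℝ) - 3) * exp (-(2 * μ * t) * r ^ (4 : ℝ))
      = (2 * μ) ^ (-((n : ℝ) - 2) / 4) * Gamma (((n : ℝ) - 2) / 4) / 4
        * t ^ (-((n : ℝ) - 2) / 4) := by
    rw [integral_rpow_mul_exp_neg_mul_rpow (by norm_num) (by linarith) (by positivity),
      mul_rpow (by positivity) ht.le, show (n : ℝ) - 3 + 1 = n - 2 by ring]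
    ring
  rw [← h_gamma]
  exact setIntegral_mono_on (integrableOn_pow_mul_G₁hat_sq hn hμ ht)
    (integrableOn_rpow_mul_exp_neg_mul_rpow (s := n - 3) (p := 4) (by linarith) (by norm_num)
      (by positivity))
    measurableSet_Ioi fun r hr => pow_mul_G₁hat_sq_le hn μ t hr

lemma le_integral_pow_mul_G₁hat_sq {n : ℕ} (hn : 3 ≤ n) {μ t : ℝ} (hμ : 0 < μ) (ht : 16 ≤ t) :
    exp (-(32 * μ)) / 4 * t ^ (-((n : ℝ) - 2) / 4)
      ≤ ∫ r in Ioi 0, r ^ (n - 1) * G₁hat μ t r ^ 2 := by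
  have ht0 : 0 < t := by linarith
  have h_int := integrableOn_pow_mul_G₁hat_sq hn hμ ht0
  obtain ⟨k, rfl⟩ := Nat.exists_eq_add_of_le' hn
  set a := t ^ (-(1 : ℝ) / 4) with ha_def
  have ha : 0 < a := rpow_pos_of_pos ht0 _
  have ha4 : a ^ 4 * t = 1 := by
    rw [ha_def, ← rpow_natCast, ← rpow_mul ht0.le]
    norm_num [rpow_neg_one, ht0.ne']
  have ha_le : a ≤ 1 / 2 := by
    by_contra! h
    have := mul_lt_mul_of_pos_right (pow_lt_pow_left₀ h (by norm_num) four_ne_zero) ht0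
    norm_num at this
    linarith
  have h_sin : a / 4 ≤ ∫ r in a..2 * a, sin (r * t + 1 / 2 * r ^ 3 * t) ^ 2 := by
    have := sub_le_integral_sin_sq_phase ht0 ha.le (by linarith : a ≤ 2 * a)
    have : 1 / (2 * t) ≤ a / 4 := by
      rw [div_le_div_iff₀ (by positivity) (by norm_num)]
      have h_cube : a ^ 3 ≤ 1 / 8 := by
        have := pow_le_pow_left₀ ha.le ha_le 3
        norm_num at this ⊢
        exact this
      nlinarith [mul_pos ha ht0]
    linarith
  have h_pointwise : ∀ r ∈ Ioc a (2 * a), a ^ k * exp (-(32 * μ)) * sin (r * t + 1 / 2 * r ^ 3 * t) ^ 2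
      ≤ r ^ (k + 3 - 1) * G₁hat μ t r ^ 2 := by
    intro r hr
    have hr0 : 0 < r := ha.trans hr.1
    rw [show k + 3 - 1 = k + 2 by omega, pow_add_two_mul_G₁hat_sq k μ t hr0.ne']
    have h_exp : exp (-(32 * μ)) ≤ exp (-(2 * μ * t) * r ^ 4) := by
      have : 2 * μ * t * r ^ 4 ≤ 32 * μ :=
        calc 2 * μ * t * r ^ 4 ≤ 2 * μ * t * (2 * a) ^ 4 := by gcongr; exact hr.2
          _ = 32 * μ * (a ^ 4 * t) := by ring
          _ = 32 * μ := by rw [ha4, mul_one]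
      exact exp_le_exp.2 (by linarith)
    have h_pow : a ^ k ≤ r ^ k := pow_le_pow_left₀ ha.le hr.1.le k
    calc a ^ k * exp (-(32 * μ)) * sin (r * t + 1 / 2 * r ^ 3 * t) ^ 2
        ≤ r ^ k * exp (-(2 * μ * t) * r ^ 4) * sin (r * t + 1 / 2 * r ^ 3 * t) ^ 2 := by gcongr
      _ = _ := by ring
  have h_t : t ^ (-((↑(k + 3) : ℝ) - 2) / 4) = a ^ k * a := by
    rw [← pow_succ, ha_def, ← rpow_natCast, ← rpow_mul ht0.le]
    push_cast
    ring_nf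
  calc exp (-(32 * μ)) / 4 * t ^ (-((↑(k + 3) : ℝ) - 2) / 4)
      = a ^ k * exp (-(32 * μ)) * (a / 4) := by rw [h_t]; ring
    _ ≤ a ^ k * exp (-(32 * μ)) * ∫ r in a..2 * a, sin (r * t + 1 / 2 * r ^ 3 * t) ^ 2 := by
        gcongr
    _ = ∫ r in Ioc a (2 * a), a ^ k * exp (-(32 * μ)) * sin (r * t + 1 / 2 * r ^ 3 * t) ^ 2 := by
        rw [intervalIntegral.integral_of_le (by linarith), integral_const_mul]
    _ ≤ ∫ r in Ioc a (2 * a), r ^ (k + 3 - 1) * G₁hat μ t r ^ 2 :=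
        setIntegral_mono_on (Continuous.integrableOn_Ioc (by fun_prop))
          (h_int.mono_set fun r hr => ha.trans hr.1) measurableSet_Ioc h_pointwise
    _ ≤ ∫ r in Ioi 0, r ^ (k + 3 - 1) * G₁hat μ t r ^ 2 := by
        refine setIntegral_mono_set h_int ?_ (LE.le.eventuallyLE fun r hr => ha.trans hr.1)
        filter_upwards [ae_restrict_mem measurableSet_Ioi] with r hr
        exact mul_nonneg (pow_nonneg (le_of_lt hr) _) (sq_nonneg _)

lemma rpow_half_mul_rpow_div_two {c t : ℝ} (hc : 0 ≤ c) (ht : 0 ≤ t) (p : ℝ) :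
    (c * t ^ p) ^ (1 / 2 : ℝ) = c ^ (1 / 2 : ℝ) * t ^ (p / 2) := by
  rw [mul_rpow hc (rpow_nonneg ht _), ← rpow_mul ht]
  ring_nf

theorem G1_optimal_L2_decay_high_dim (n : ℕ) (hn : 3 ≤ n) (μ : ℝ) (hμ : 0 < μ) :
    ∃ c₁ > (0 : ℝ), ∃ c₂ > (0 : ℝ), ∃ T₀ : ℝ, 1 ≤ T₀ ∧ ∀ t : ℝ, T₀ ≤ t →
      c₁ * t ^ (-((n : ℝ) - 2) / 8) ≤
        (∫ ξ : EuclideanSpace ℝ (Fin n),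
          (‖ξ‖⁻¹ * Real.sin (‖ξ‖ * t + (1 / 2) * ‖ξ‖ ^ 3 * t) * Real.exp (-μ * ‖ξ‖ ^ 4 * t)) ^ 2) ^
          ((1 : ℝ) / 2) ∧
      (∫ ξ : EuclideanSpace ℝ (Fin n),
          (‖ξ‖⁻¹ * Real.sin (‖ξ‖ * t + (1 / 2) * ‖ξ‖ ^ 3 * t) * Real.exp (-μ * ‖ξ‖ ^ 4 * t)) ^ 2) ^
          ((1 : ℝ) / 2) ≤ c₂ * t ^ (-((n : ℝ) - 2) / 8) := by
  obtain ⟨κ, hκ, h_polar⟩ : ∃ κ > (0 : ℝ), ∀ t, ∫ ξ : EuclideanSpace ℝ (Fin n), G₁hat μ t ‖ξ‖ ^ 2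
      = κ * ∫ r in Ioi 0, r ^ (n - 1) * G₁hat μ t r ^ 2 := by
    have : NeZero n := ⟨by omega⟩
    refine ⟨n * volume.real (Metric.ball (0 : EuclideanSpace ℝ (Fin n)) 1), mul_pos
      (by positivity) (ENNReal.toReal_pos (Metric.measure_ball_pos volume _ one_pos).ne'
        measure_ball_lt_top.ne), fun t => ?_⟩
    rw [integral_fun_norm_addHaar volume fun r => G₁hat μ t r ^ 2, finrank_euclideanSpace_fin]
    simp only [nsmul_eq_mul, smul_eq_mul, mul_assoc]
  have hΓ : 0 < Gamma (((n : ℝ) - 2) / 4) := by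
    have : (3 : ℝ) ≤ n := by exact_mod_cast hn
    exact Gamma_pos_of_pos (by linarith)
  set p : ℝ := -((n : ℝ) - 2) / 4 with hp
  set c₁ := κ * (exp (-(32 * μ)) / 4)
  set c₂ := κ * ((2 * μ) ^ p * Gamma (((n : ℝ) - 2) / 4) / 4)
  have hc₁ : 0 < c₁ := by positivity
  have hc₂ : 0 < c₂ := by positivity
  refine ⟨c₁ ^ (1 / 2 : ℝ), by positivity, c₂ ^ (1 / 2 : ℝ), by positivity, 16, by norm_num,
    fun t ht => ?_⟩
  have ht0 : 0 < t := by linarith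
  have h_lower : c₁ * t ^ p ≤ ∫ ξ : EuclideanSpace ℝ (Fin n), G₁hat μ t ‖ξ‖ ^ 2 := by
    rw [h_polar, mul_assoc]
    exact mul_le_mul_of_nonneg_left (le_integral_pow_mul_G₁hat_sq hn hμ ht) hκ.le
  have h_upper : ∫ ξ : EuclideanSpace ℝ (Fin n), G₁hat μ t ‖ξ‖ ^ 2 ≤ c₂ * t ^ p := by
    rw [h_polar, mul_assoc]
    exact mul_le_mul_of_nonneg_left (integral_pow_mul_G₁hat_sq_le hn hμ ht0) hκ.le
  rw [show -((n : ℝ) - 2) / 8 = p / 2 by rw [hp]; ring, ← rpow_half_mul_rpow_div_two hc₁.le ht0.le,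
    ← rpow_half_mul_rpow_div_two hc₂.le ht0.le]
  exact ⟨rpow_le_rpow (by positivity) h_lower (by norm_num),
    rpow_le_rpow ((by positivity : (0 : ℝ) ≤ c₁ * t ^ p).trans h_lower) h_upper (by norm_num)⟩
end

section
/- Let μ ∈ (0,1) and, for small r > 0, set λ_R(r) = -μr⁴ and λ_I(r) = √(r² + r⁴ - μ²r⁸). Define K̂₁(t,r) = (sin(λ_I(r)t)/λ_I(r)) e^{λ_R(r)t} and Ĝ₁(t,r) = (1/r) sin(rt + (1/2)r³t) e^{-μr⁴t}. Then there exist C, c, ε₀ > 0 such that |K̂₁(t,r) - Ĝ₁(t,r)| ≤ C e^{-c r⁴ t} for all t ≥ 0 and 0 < r ≤ ε₀. -/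
/-!
Write `λ = λ_I(r)` and `ω = r + r³/2`. For small `r` one has `r ≤ λ ≤ ω` and
`ω² - λ² = r⁶/4 + μ²r⁸`, so `ω - λ = O(r⁵)`. Splitting
`sin(λt)/λ - sin(ωt)/r = (sin(λt) - sin(ωt))/λ + sin(ωt)(1/λ - 1/r)`, the first term is
`O(r⁴t)` because `sin` is 1-Lipschitz and the second is `O(r)`. Hence the error is
`O((1 + r⁴t) e^{-μr⁴t})`, and the polynomial factor is absorbed by half of the exponential decay.
-/

open Real

theorem abs_sin_div_sub_sin_div_le {l ω r t : ℝ} (hl : 0 < l) :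
    |sin (l * t) / l - sin (ω * t) / r| ≤ |l - ω| * |t| / l + |1 / l - 1 / r| := by
  have hsplit : sin (l * t) / l - sin (ω * t) / r =
      (sin (l * t) - sin (ω * t)) / l + sin (ω * t) * (1 / l - 1 / r) := by
    field_simp
    ring
  have hlip : |sin (l * t) - sin (ω * t)| ≤ |l - ω| * |t| := by
    simpa only [← sub_mul, abs_mul] using abs_sin_sub_sin_le (l * t) (ω * t)
  rw [hsplit]
  calc _ ≤ |sin (l * t) - sin (ω * t)| / l + |sin (ω * t)| * |1 / l - 1 / r| := by
        exact (abs_add_le _ _).trans_eq (by rw [abs_div, abs_mul, abs_of_pos hl])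
    _ ≤ |l - ω| * |t| / l + 1 * |1 / l - 1 / r| := by
        gcongr
        exact abs_sin_le_one _
    _ = _ := by rw [one_mul]

theorem one_add_mul_exp_neg_le {c x : ℝ} (hc : 0 < c) (hx : 0 ≤ x) :
    (1 + x) * exp (-c * x) ≤ (1 + 2 / c) * exp (-(c / 2) * x) := by
  have hhalf : exp (-c * x) = exp (-(c / 2) * x) * exp (-(c / 2) * x) := by
    rw [← exp_add]
    ring_nf
  have hpoly : x * exp (-(c / 2) * x) ≤ 2 / c := by
    have := add_one_le_exp (c / 2 * x)
    rw [neg_mul, exp_neg, ← div_eq_mul_inv, div_le_iff₀ (exp_pos _), div_mul_eq_mul_div,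
      le_div_iff₀ hc]
    nlinarith
  have hexp : exp (-(c / 2) * x) ≤ 1 := exp_le_one_iff.mpr (by nlinarith)
  calc (1 + x) * exp (-c * x)
      = (exp (-(c / 2) * x) + x * exp (-(c / 2) * x)) * exp (-(c / 2) * x) := by
        rw [hhalf]
        ring
    _ ≤ (1 + 2 / c) * exp (-(c / 2) * x) := by gcongr

/-- The frequency `λ_I(r)` of the linearised dissipative Boussinesq equation. -/
noncomputable def boussinesqFreq (μ r : ℝ) : ℝ := √(r ^ 2 + r ^ 4 - μ ^ 2 * r ^ 8)

section boussinesqFreq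

variable {μ r : ℝ}

theorem le_boussinesqFreq (hμ : μ ^ 2 ≤ 1) (hr : 0 ≤ r) (hr1 : r ≤ 1) :
    r ≤ boussinesqFreq μ r := by
  have hr84 : r ^ 8 ≤ r ^ 4 := pow_le_pow_of_le_one hr hr1 (by norm_num)
  have hS : r ^ 2 ≤ r ^ 2 + r ^ 4 - μ ^ 2 * r ^ 8 := by
    nlinarith [mul_le_mul hμ hr84 (by positivity) zero_le_one]
  calc r = √(r ^ 2) := (sqrt_sq hr).symm
    _ ≤ boussinesqFreq μ r := sqrt_le_sqrt hS

theorem boussinesqFreq_le (hr : 0 ≤ r) : boussinesqFreq μ r ≤ r + r ^ 3 / 2 := by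
  refine (sqrt_le_left (by positivity)).mpr ?_
  nlinarith [mul_nonneg (sq_nonneg μ) (pow_nonneg hr 8), pow_nonneg hr 6]

theorem sub_boussinesqFreq_le (hμ : μ ^ 2 ≤ 1) (hr : 0 < r) (hr1 : r ≤ 1) :
    r + r ^ 3 / 2 - boussinesqFreq μ r ≤ r ^ 5 := by
  have hrl := le_boussinesqFreq hμ hr.le hr1
  have hlω := boussinesqFreq_le (μ := μ) hr.le
  have hr86 : r ^ 8 ≤ r ^ 6 := pow_le_pow_of_le_one hr.le hr1 (by norm_num)
  have hsq : boussinesqFreq μ r ^ 2 = r ^ 2 + r ^ 4 - μ ^ 2 * r ^ 8 :=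
    sq_sqrt (by nlinarith [mul_le_mul hμ hr86 (by positivity) zero_le_one, pow_nonneg hr.le 4])
  -- `(ω - λ)(ω + λ) = r⁶/4 + μ²r⁸ ≤ 5r⁶/4` and `ω + λ ≥ 2r`
  have hprod : (r + r ^ 3 / 2 - boussinesqFreq μ r) * (2 * r) ≤ 5 / 4 * r ^ 6 := by
    nlinarith [mul_le_mul hμ hr86 (by positivity) zero_le_one,
      mul_le_mul_of_nonneg_left (show 2 * r ≤ r + r ^ 3 / 2 + boussinesqFreq μ r by
        nlinarith [pow_pos hr 3]) (sub_nonneg.mpr hlω)]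
  nlinarith [pow_pos hr 5]

theorem abs_sin_boussinesqFreq_div_sub_le {t : ℝ} (hμ : μ ^ 2 ≤ 1) (hr : 0 < r) (hr1 : r ≤ 1)
    (ht : 0 ≤ t) :
    |sin (boussinesqFreq μ r * t) / boussinesqFreq μ r - sin ((r + r ^ 3 / 2) * t) / r| ≤
      1 + r ^ 4 * t := by
  set l := boussinesqFreq μ r
  have hrl : r ≤ l := le_boussinesqFreq hμ hr.le hr1
  have hlω : l ≤ r + r ^ 3 / 2 := boussinesqFreq_le hr.le
  have hωl : r + r ^ 3 / 2 - l ≤ r ^ 5 := sub_boussinesqFreq_le hμ hr hr1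
  have hl : 0 < l := hr.trans_le hrl
  have hlipschitz : |l - (r + r ^ 3 / 2)| * |t| / l ≤ r ^ 4 * t := by
    rw [abs_sub_comm, abs_of_nonneg (sub_nonneg.mpr hlω), abs_of_nonneg ht, div_le_iff₀ hl]
    calc (r + r ^ 3 / 2 - l) * t ≤ r ^ 5 * t := by gcongr
      _ = r ^ 4 * t * r := by ring
      _ ≤ r ^ 4 * t * l := by gcongr
  have hinv : |1 / l - 1 / r| ≤ 1 := by
    rw [abs_sub_comm, abs_of_nonneg (sub_nonneg.mpr (one_div_le_one_div_of_le hr hrl)),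
      div_sub_div _ _ hr.ne' hl.ne', div_le_one (by positivity)]
    nlinarith [mul_le_mul_of_nonneg_left hrl hr.le]
  linarith [abs_sin_div_sub_sin_div_le (ω := r + r ^ 3 / 2) (r := r) (t := t) hl]

end boussinesqFreq

theorem kernel_K1_G1_error_estimate (μ : ℝ) (hμ : μ ∈ Set.Ioo (0 : ℝ) 1) :
    ∃ C > (0 : ℝ), ∃ c > (0 : ℝ), ∃ ε₀ > (0 : ℝ), ∀ t : ℝ, 0 ≤ t → ∀ r : ℝ, 0 < r → r ≤ ε₀ →
      |Real.sin (Real.sqrt (r ^ 2 + r ^ 4 - μ ^ 2 * r ^ 8) * t) /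
            Real.sqrt (r ^ 2 + r ^ 4 - μ ^ 2 * r ^ 8) * Real.exp (-μ * r ^ 4 * t) -
          (1 / r) * Real.sin (r * t + (1 / 2) * r ^ 3 * t) * Real.exp (-μ * r ^ 4 * t)| ≤
        C * Real.exp (-c * r ^ 4 * t) := by
  obtain ⟨hμ0, hμ1⟩ := hμ
  have hμsq : μ ^ 2 ≤ 1 := by nlinarith
  refine ⟨1 + 2 / μ, by positivity, μ / 2, by positivity, 1, one_pos, fun t ht r hr hr1 => ?_⟩
  rw [show r * t + 1 / 2 * r ^ 3 * t = (r + r ^ 3 / 2) * t by ring]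
  calc _ = |(sin (boussinesqFreq μ r * t) / boussinesqFreq μ r - sin ((r + r ^ 3 / 2) * t) / r) *
          exp (-μ * r ^ 4 * t)| := by
        unfold boussinesqFreq
        ring_nf
    _ = |sin (boussinesqFreq μ r * t) / boussinesqFreq μ r - sin ((r + r ^ 3 / 2) * t) / r| *
          exp (-μ * r ^ 4 * t) := by rw [abs_mul, abs_of_pos (exp_pos _)]
    _ ≤ (1 + r ^ 4 * t) * exp (-μ * r ^ 4 * t) := by
        gcongr
        exact abs_sin_boussinesqFreq_div_sub_le hμsq hr hr1 ht
    _ ≤ (1 + 2 / μ) * exp (-(μ / 2) * r ^ 4 * t) := by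
        simpa only [mul_assoc] using one_add_mul_exp_neg_le hμ0 (by positivity : 0 ≤ r ^ 4 * t)
end

section
/- Let n ≥ 1, c > 0, s ≥ 0, and g ∈ L¹(ℝⁿ). Define E(t) = (∫_{ℝⁿ} |ξ|^{2s} e^{-2c|ξ|⁴ t} |ĝ(ξ) - P_g|² dξ)^{1/2} where P_g = ∫ g(x) dx. Then t^{(2s+n)/8} E(t) → 0 as t → ∞. -/
/-!
Write `ĝ(ξ) - P_g = 𝓕 g (ξ / 2π) - 𝓕 g 0`; as a function of `ξ` it is continuous, bounded by
`2‖g‖₁` and vanishes at `0`. The substitution `ξ = t^{-1/4} η` turns `t^{(2s+n)/4} E(t)²` into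
`∫ |η|^{2s} e^{-2c|η|⁴} |ĝ(t^{-1/4} η) - P_g|² dη`, whose weight is integrable (it is dominated by a
Gaussian) and whose last factor tends to `0` pointwise, so dominated convergence concludes.
-/

open MeasureTheory Complex Filter RealInnerProductSpace Topology FourierTransform

theorem rpow_mul_exp_neg_mul_pow_four_le {a s r : ℝ} (ha : 0 < a) (hs : 0 ≤ s) (hr : 0 ≤ r) :
    r ^ (2 * s) * Real.exp (-a * r ^ 4) ≤
      Real.exp ((s + 1) ^ 2 / (4 * a)) * Real.exp (-r ^ 2) := by
  have hpow : r ^ (2 * s) ≤ Real.exp (s * r ^ 2) := by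
    calc r ^ (2 * s) = (r ^ 2) ^ s := by
          rw [Real.rpow_mul hr, Real.rpow_two]
      _ ≤ Real.exp (r ^ 2) ^ s :=
          Real.rpow_le_rpow (sq_nonneg r) ((Real.add_one_le_exp _).trans' (by linarith)) hs
      _ = Real.exp (s * r ^ 2) := by rw [← Real.exp_mul, mul_comm]
  -- completing the square in `r²`
  have hsq : s * r ^ 2 + -a * r ^ 4 ≤ (s + 1) ^ 2 / (4 * a) + -r ^ 2 := by
    have hmul : ((s + 1) * r ^ 2 - a * r ^ 4) * (4 * a) ≤ (s + 1) ^ 2 := by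
      nlinarith [sq_nonneg (2 * a * r ^ 2 - (s + 1))]
    linarith [(le_div_iff₀ (by positivity)).2 hmul]
  calc r ^ (2 * s) * Real.exp (-a * r ^ 4) ≤ Real.exp (s * r ^ 2) * Real.exp (-a * r ^ 4) := by
        gcongr
    _ ≤ _ := by rw [← Real.exp_add, ← Real.exp_add]; exact Real.exp_le_exp.2 hsq

section InnerProductSpace

variable {V : Type*} [NormedAddCommGroup V] [InnerProductSpace ℝ V] [FiniteDimensional ℝ V]
  [MeasurableSpace V] [BorelSpace V]

theorem integrable_exp_neg_sq_norm : Integrable (fun v : V => Real.exp (-‖v‖ ^ 2)) := by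
  refine (GaussianFourier.integrable_cexp_neg_mul_sq_norm_add (b := 1) (by simp) 0 (0 : V)).norm
    |>.congr (ae_of_all _ fun v => ?_)
  simp only [zero_mul, add_zero, neg_mul, one_mul]
  rw [← Complex.ofReal_pow, ← Complex.ofReal_neg, Complex.norm_exp_ofReal]

theorem integrable_norm_rpow_mul_exp_neg_mul_norm_pow_four {a s : ℝ} (ha : 0 < a) (hs : 0 ≤ s) :
    Integrable (fun v : V => ‖v‖ ^ (2 * s) * Real.exp (-a * ‖v‖ ^ 4)) := by
  refine (integrable_exp_neg_sq_norm.const_mul (Real.exp ((s + 1) ^ 2 / (4 * a)))).mono'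
    (by fun_prop) (ae_of_all _ fun v => ?_)
  rw [Real.norm_of_nonneg (by positivity)]
  exact rpow_mul_exp_neg_mul_pow_four_le ha hs (norm_nonneg v)

theorem integral_cexp_neg_I_inner_mul_eq_fourier (g : V → ℂ) (ξ : V) :
    ∫ x, cexp (-I * ⟪x, ξ⟫) * g x = 𝓕 g ((2 * Real.pi)⁻¹ • ξ) := by
  rw [Real.fourier_eq']
  congr 1 with x
  rw [inner_smul_right, smul_eq_mul]
  congr 2
  push_cast
  field_simp

theorem integral_cexp_neg_I_inner_mul_sub_integral (g : V → ℂ) (ξ : V) :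
    (∫ x, cexp (-I * ⟪x, ξ⟫) * g x) - ∫ x, g x = 𝓕 g ((2 * Real.pi)⁻¹ • ξ) - 𝓕 g 0 := by
  simpa using congrArg₂ (· - ·) (integral_cexp_neg_I_inner_mul_eq_fourier g ξ)
    (integral_cexp_neg_I_inner_mul_eq_fourier g 0)

theorem continuous_fourier_of_integrable {g : V → ℂ} (hg : Integrable g) : Continuous (𝓕 g) :=
  VectorFourier.fourierIntegral_continuous Real.continuous_fourierChar (innerSL ℝ).continuous₂ hg

theorem norm_fourier_sub_fourier_zero_le (g : V → ℂ) (ξ : V) :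
    ‖𝓕 g ξ - 𝓕 g 0‖ ≤ 2 * ∫ x, ‖g x‖ := by
  have hbound (w : V) : ‖𝓕 g w‖ ≤ ∫ x, ‖g x‖ :=
    VectorFourier.norm_fourierIntegral_le_integral_norm _ _ _ _ _
  linarith [norm_sub_le (𝓕 g ξ) (𝓕 g 0), hbound ξ, hbound 0]

end InnerProductSpace

section Rescaling

variable {E : Type*} [NormedAddCommGroup E] [NormedSpace ℝ E] [MeasurableSpace E] [BorelSpace E]

theorem tendsto_integral_mul_comp_smul_nhds_zero {μ : Measure E} {w ψ : E → ℝ}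
    (hw : Integrable w μ) (hψ : Continuous ψ) (hψ0 : ψ 0 = 0) {C : ℝ} (hC : ∀ x, |ψ x| ≤ C) :
    Tendsto (fun r : ℝ => ∫ η, w η * ψ (r • η) ∂μ) (𝓝 0) (𝓝 0) := by
  have hlim (η : E) : Tendsto (fun r : ℝ => w η * ψ (r • η)) (𝓝 0) (𝓝 0) := by
    have hsmul := (continuous_id.smul continuous_const).tendsto' (0 : ℝ) (0 : E) (zero_smul ℝ η)
    simpa using ((hψ.tendsto' 0 0 hψ0).comp hsmul).const_mul (w η)
  simpa using tendsto_integral_filter_of_dominated_convergence (F := fun r η => w η * ψ (r • η))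
    (fun η => ‖w η‖ * C)
    (Eventually.of_forall fun r =>
      hw.1.mul (hψ.comp (continuous_const_smul r)).aestronglyMeasurable)
    (Eventually.of_forall fun r => ae_of_all _ fun η => by
      rw [norm_mul, Real.norm_eq_abs (ψ _)]
      exact mul_le_mul_of_nonneg_left (hC _) (norm_nonneg _))
    (hw.norm.mul_const C) (ae_of_all _ hlim)

variable [FiniteDimensional ℝ E] (μ : Measure E) [μ.IsAddHaarMeasure]

theorem integral_norm_rpow_mul_exp_mul_comp_smul_rpow_neg_quarter (a s : ℝ) {t : ℝ} (ht : 0 < t)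
    (ψ : E → ℝ) :
    ∫ η, ‖η‖ ^ (2 * s) * Real.exp (-a * ‖η‖ ^ 4) * ψ (t ^ (-(1 / 4) : ℝ) • η) ∂μ =
      t ^ ((2 * s + Module.finrank ℝ E) / 4) *
        ∫ ξ, ‖ξ‖ ^ (2 * s) * Real.exp (-a * ‖ξ‖ ^ 4 * t) * ψ ξ ∂μ := by
  set R : ℝ := t ^ (-(1 / 4) : ℝ)
  have hR : 0 < R := Real.rpow_pos_of_pos ht _
  have hR4 : R ^ 4 * t = 1 := by
    rw [← Real.rpow_natCast, ← Real.rpow_mul ht.le, ← Real.rpow_add_one ht.ne']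
    norm_num
  have hpt (η : E) : ‖η‖ ^ (2 * s) * Real.exp (-a * ‖η‖ ^ 4) * ψ (R • η) =
      t ^ (s / 2) * (‖R • η‖ ^ (2 * s) * Real.exp (-a * ‖R • η‖ ^ 4 * t) * ψ (R • η)) := by
    have hnorm : ‖R • η‖ = R * ‖η‖ := by rw [norm_smul, Real.norm_of_nonneg hR.le]
    have hweight : t ^ (s / 2) * R ^ (2 * s) = 1 := by
      rw [← Real.rpow_mul ht.le, ← Real.rpow_add ht]
      convert Real.rpow_zero t using 2
      ring
    have hexp : -a * (R * ‖η‖) ^ 4 * t = -a * ‖η‖ ^ 4 := by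
      linear_combination (-a * ‖η‖ ^ 4) * hR4
    rw [hnorm, hexp, Real.mul_rpow hR.le (norm_nonneg η)]
    linear_combination (‖η‖ ^ (2 * s) * Real.exp (-a * ‖η‖ ^ 4) * ψ (R • η)) * hweight.symm
  have hjac : (R ^ Module.finrank ℝ E)⁻¹ = t ^ ((Module.finrank ℝ E : ℝ) / 4) := by
    rw [← Real.rpow_natCast, ← Real.rpow_mul ht.le, ← Real.rpow_neg ht.le]
    ring_nf
  rw [integral_congr_ae (ae_of_all _ hpt), integral_const_mul,
    Measure.integral_comp_smul_of_nonneg μ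
      (fun ξ => ‖ξ‖ ^ (2 * s) * Real.exp (-a * ‖ξ‖ ^ 4 * t) * ψ ξ) R (hR := hR.le),
    hjac, smul_eq_mul, ← mul_assoc, ← Real.rpow_add ht]
  congr 2
  ring

end Rescaling

theorem little_o_improvement_general (n : ℕ) (c s : ℝ) (hc : 0 < c) (hs : 0 ≤ s)
    (g : EuclideanSpace ℝ (Fin n) → ℂ) (hg : Integrable g) :
    Tendsto (fun t : ℝ =>
      t ^ ((2 * s + (n : ℝ)) / 8) *
        (∫ ξ : EuclideanSpace ℝ (Fin n),
          ‖ξ‖ ^ (2 * s) * Real.exp (-2 * c * ‖ξ‖ ^ 4 * t) *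
            ‖(∫ x, Complex.exp (-Complex.I * (⟪x, ξ⟫ : ℝ)) * g x) - ∫ x, g x‖ ^ 2) ^
          ((1 : ℝ) / 2)) atTop (nhds 0) := by
  simp_rw [integral_cexp_neg_I_inner_mul_sub_integral]
  rw [show (-2 : ℝ) * c = -(2 * c) by ring]
  set ψ : EuclideanSpace ℝ (Fin n) → ℝ := fun ξ => ‖𝓕 g ((2 * Real.pi)⁻¹ • ξ) - 𝓕 g 0‖ ^ 2
  have hψ_cont : Continuous ψ := by
    have hFg := continuous_fourier_of_integrable hg
    fun_prop
  have hψ_bound (ξ) : |ψ ξ| ≤ (2 * ∫ x, ‖g x‖) ^ 2 := by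
    rw [abs_of_nonneg (by positivity)]
    exact pow_le_pow_left₀ (norm_nonneg _) (norm_fourier_sub_fourier_zero_le g _) 2
  have hlim : Tendsto (fun t : ℝ => (∫ η : EuclideanSpace ℝ (Fin n),
      ‖η‖ ^ (2 * s) * Real.exp (-(2 * c) * ‖η‖ ^ 4) * ψ (t ^ (-(1 / 4) : ℝ) • η)) ^ ((1 : ℝ) / 2))
      atTop (𝓝 0) := by
    have := (tendsto_integral_mul_comp_smul_nhds_zero
      (integrable_norm_rpow_mul_exp_neg_mul_norm_pow_four (a := 2 * c) (by positivity) hs) hψ_cont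
      (by simp [ψ]) hψ_bound).comp (tendsto_rpow_neg_atTop (by norm_num : (0 : ℝ) < 1 / 4))
    simpa using this.rpow_const (p := 1 / 2) (Or.inr (by norm_num))
  refine hlim.congr' ?_
  filter_upwards [eventually_gt_atTop 0] with t ht
  rw [integral_norm_rpow_mul_exp_mul_comp_smul_rpow_neg_quarter volume _ s ht ψ,
    finrank_euclideanSpace_fin,
    Real.mul_rpow (by positivity) (integral_nonneg fun ξ => by positivity), ← Real.rpow_mul ht.le]
  congr 2
  ring

theorem little_o_improvement (n : ℕ) (hn : 1 ≤ n) (c s : ℝ) (hc : 0 < c) (hs : 0 ≤ s)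
    (g : EuclideanSpace ℝ (Fin n) → ℂ) (hg : Integrable g) :
    Tendsto (fun t : ℝ =>
      t ^ ((2 * s + (n : ℝ)) / 8) *
        (∫ ξ : EuclideanSpace ℝ (Fin n),
          ‖ξ‖ ^ (2 * s) * Real.exp (-2 * c * ‖ξ‖ ^ 4 * t) *
            ‖(∫ x, Complex.exp (-Complex.I * (⟪x, ξ⟫ : ℝ)) * g x) - ∫ x, g x‖ ^ 2) ^
          ((1 : ℝ) / 2)) atTop (nhds 0) :=
  little_o_improvement_general n c s hc hs g hg
end
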